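/- arXiv:1703.00884 — 6 statements merged into one kernel-verified Lean document; each statement's English description precedes it below -/
import Mathlib

section
/- Let h be any function satisfying max{z₀, 0} < h(t) < t/2 for all t > max{2z₀, 0}. Then for every t > max{2z₀, 0}: P(X + Z > t) − P(Z > t) = p(t) − q(t) + ε₁(t) − ε₂(t), where p(t) := (1/|E X|) ∫_{h(t)}^{t−h(t)} F̄(t−s)·F̄(s) ds, q(t) := (F̄(t)/|E X|) ∫_{h(t)}^∞ (2F̄(s) − F(−s)) ds, ε₁(t) := (1/|E X|)·[ ∫_0^{h(t)} (F̄(t−s) − F̄(t))·F̄(s) ds + ∫_{z₀}^{h(t)} (F̄(t−s) − F̄(t))·F̄(s) ds + ∫_{−h(t)}^0 (F̄(t) − F̄(t−s))·F(s) ds ], and ε₂(t) := (1/|E X|) ∫_{−∞}^{−h(t)} F̄(t−s)·F(s) ds. -/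
/-!
Write `a = |E X|` and `φ(c) = ∫_c^∞ F̄`. Since `φ` is continuous, `φ(z₀) = a`, so `Z` has
density `F̄ / a` on `(z₀, ∞)`. By independence `P(X + Z > t) = a⁻¹ ∫_{z₀}^∞ F̄(t - s) F̄(s) ds`,
and for `t ≥ z₀` also `P(Z > t) = φ(t) / a = a⁻¹ ∫_{-∞}^0 F̄(t - s) ds`. Split the first
integral at `h` and `t - h` and fold its part over `(t - h, ∞)` back onto `(-∞, h)` by
`s ↦ t - s`; split the second one with `F̄ + F = 1`. What remains beyond `p - q + ε₁ - ε₂` is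
a multiple of `F̄(t)`, and it vanishes by the layer-cake formula
`E X = ∫_0^∞ F̄(s) ds - ∫_0^∞ F(-s) ds` together with `φ(z₀) = -E X`.
-/

open MeasureTheory ProbabilityTheory Filter Set
open scoped ENNReal Topology

section Reflection

variable {E : Type*} [NormedAddCommGroup E]

theorem integral_Iio_comp_sub_left [NormedSpace ℝ E] (f : ℝ → E) (t c : ℝ) :
    ∫ x in Iio c, f (t - x) = ∫ x in Ioi (t - c), f x := by
  simpa [preimage_const_sub_Ioi] using
    (Measure.measurePreserving_sub_left volume t).setIntegral_preimage_emb
      (Homeomorph.subLeft t).measurableEmbedding f (Ioi (t - c))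

theorem MeasureTheory.IntegrableOn.comp_sub_left_Iio {f : ℝ → E} {t c : ℝ}
    (hf : IntegrableOn f (Ioi (t - c))) :
    IntegrableOn (fun x => f (t - x)) (Iio c) := by
  have := ((Measure.measurePreserving_sub_left volume t).integrableOn_comp_preimage
    (Homeomorph.subLeft t).measurableEmbedding).2 hf
  simpa [preimage_const_sub_Ioi, Function.comp_def] using this

end Reflection

section Tails

variable {μ : Measure ℝ}

theorem antitone_measureReal_Ioi [IsFiniteMeasure μ] : Antitone fun s => μ.real (Ioi s) :=
  fun _ _ hst => measureReal_mono (Ioi_subset_Ioi hst)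

theorem monotone_measureReal_Iic [IsFiniteMeasure μ] : Monotone fun s => μ.real (Iic s) :=
  fun _ _ hst => measureReal_mono (Iic_subset_Iic.2 hst)

theorem monotone_measureReal_Ioi_sub [IsFiniteMeasure μ] (t : ℝ) :
    Monotone fun s => μ.real (Ioi (t - s)) :=
  fun _ _ h => antitone_measureReal_Ioi (sub_le_sub_left h t)

theorem antitone_measureReal_Iic_neg [IsFiniteMeasure μ] :
    Antitone fun s => μ.real (Iic (-s)) :=
  fun _ _ h => monotone_measureReal_Iic (neg_le_neg h)

theorem measureReal_Ioi_add_measureReal_Iic [IsProbabilityMeasure μ] (s : ℝ) :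
    μ.real (Ioi s) + μ.real (Iic s) = 1 := by
  rw [← compl_Iic, add_comm, measureReal_add_measureReal_compl measurableSet_Iic, probReal_univ]

theorem Antitone.integrableOn_Ioi {G : ℝ → ℝ} (hG : Antitone G) {b : ℝ}
    (hb : IntegrableOn G (Ioi b)) (c : ℝ) : IntegrableOn G (Ioi c) := by
  refine (((hG.antitoneOn _).integrableOn_isCompact (isCompact_Icc (a := c) (b := b))).union
    hb).mono_set fun x (hx : c < x) => ?_
  rcases le_or_gt x b with h | h
  exacts [Or.inl ⟨hx.le, h⟩, Or.inr h]

theorem integrableOn_Ioi_measureReal_Ioi [IsFiniteMeasure μ] (hμ : Integrable id μ) (c : ℝ) :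
    IntegrableOn (fun s => μ.real (Ioi s)) (Ioi c) := by
  refine antitone_measureReal_Ioi.integrableOn_Ioi (b := 0)
    ⟨antitone_measureReal_Ioi.measurable.aestronglyMeasurable, ?_⟩ c
  rw [hasFiniteIntegral_iff_ofReal (ae_of_all _ fun _ => measureReal_nonneg)]
  calc ∫⁻ s in Ioi 0, ENNReal.ofReal (μ.real (Ioi s))
      = ∫⁻ s in Ioi 0, μ {x | s < max x 0} := by
        refine setLIntegral_congr_fun measurableSet_Ioi fun s (hs : 0 < s) => ?_
        simp [ofReal_measureReal, hs.not_gt, Ioi_def]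
    _ = ∫⁻ x, ENNReal.ofReal (max x 0) ∂μ :=
        (lintegral_eq_lintegral_meas_lt μ (ae_of_all _ fun _ => le_max_right _ _)
          (measurable_id.max measurable_const).aemeasurable).symm
    _ < ∞ := hμ.pos_part.lintegral_lt_top

theorem integrableOn_Ioi_measureReal_Iic_neg [IsFiniteMeasure μ] (hμ : Integrable id μ)
    (c : ℝ) : IntegrableOn (fun s => μ.real (Iic (-s))) (Ioi c) := by
  refine antitone_measureReal_Iic_neg.integrableOn_Ioi (b := 0)
    ⟨antitone_measureReal_Iic_neg.measurable.aestronglyMeasurable, ?_⟩ c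
  rw [hasFiniteIntegral_iff_ofReal (ae_of_all _ fun _ => measureReal_nonneg)]
  calc ∫⁻ s in Ioi 0, ENNReal.ofReal (μ.real (Iic (-s)))
      = ∫⁻ s in Ioi 0, μ {x | s ≤ max (-x) 0} := by
        refine setLIntegral_congr_fun measurableSet_Ioi fun s (hs : 0 < s) => ?_
        simp [ofReal_measureReal, hs.not_ge, Iic_def, le_neg]
    _ = ∫⁻ x, ENNReal.ofReal (max (-x) 0) ∂μ :=
        (lintegral_eq_lintegral_meas_le μ (ae_of_all _ fun _ => le_max_right _ _)
          (measurable_id.neg.max measurable_const).aemeasurable).symm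
    _ < ∞ := hμ.neg_part.lintegral_lt_top

theorem integral_id_eq_integral_Ioi_sub (hμ : Integrable id μ) :
    ∫ x, x ∂μ = (∫ s in Ioi 0, μ.real (Ioi s)) - ∫ s in Ioi 0, μ.real (Iic (-s)) := by
  replace hμ : Integrable (fun x => x) μ := hμ
  have hpos : ∫ x, max x 0 ∂μ = ∫ s in Ioi 0, μ.real (Ioi s) := by
    rw [hμ.pos_part.integral_eq_integral_meas_lt (ae_of_all _ fun _ => le_max_right _ _)]
    refine setIntegral_congr_fun measurableSet_Ioi fun s (hs : 0 < s) => ?_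
    simp [hs.not_gt, Ioi_def]
  have hneg : ∫ x, max (-x) 0 ∂μ = ∫ s in Ioi 0, μ.real (Iic (-s)) := by
    rw [hμ.neg_part.integral_eq_integral_meas_le (ae_of_all _ fun _ => le_max_right _ _)]
    refine setIntegral_congr_fun measurableSet_Ioi fun s (hs : 0 < s) => ?_
    simp [hs.not_ge, Iic_def, le_neg]
  rw [← hpos, ← hneg, ← integral_sub hμ.pos_part hμ.neg_part]
  simp_rw [max_zero_sub_max_neg_zero_eq_self]

variable [IsProbabilityMeasure μ]

theorem neg_add_integral_id_le_integral_Ioi (hμ : Integrable id μ) (c : ℝ) :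
    -c + ∫ x, x ∂μ ≤ ∫ s in Ioi c, μ.real (Ioi s) := by
  have hFbar := integrableOn_Ioi_measureReal_Ioi hμ
  have hF := integrableOn_Ioi_measureReal_Iic_neg hμ
  have hsplit := intervalIntegral.integral_interval_add_Ioi (hFbar c) (hFbar 0)
  have hsplit_neg := intervalIntegral.integral_interval_add_Ioi (hF 0) (hF (-c))
  have hsum : (∫ s in c..0, μ.real (Ioi s)) + ∫ s in c..0, μ.real (Iic s) = -c := by
    rw [← intervalIntegral.integral_add antitone_measureReal_Ioi.intervalIntegrable
      monotone_measureReal_Iic.intervalIntegrable]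
    simp [measureReal_Ioi_add_measureReal_Iic]
  have hreflect : ∫ s in c..0, μ.real (Iic s) = ∫ s in 0..(-c), μ.real (Iic (-s)) := by
    simp [intervalIntegral.integral_comp_neg (fun s => μ.real (Iic s))]
  have htail : 0 ≤ ∫ s in Ioi (-c), μ.real (Iic (-s)) :=
    setIntegral_nonneg measurableSet_Ioi fun _ _ => measureReal_nonneg
  rw [integral_id_eq_integral_Ioi_sub hμ]
  linarith

variable {f : ℝ → ℝ} {S : Set ℝ} {A : ℝ → Set ℝ}

theorem MeasureTheory.IntegrableOn.measureReal_mul (hf : IntegrableOn f S)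
    (hA : Measurable fun x => μ.real (A x)) : IntegrableOn (fun x => μ.real (A x) * f x) S :=
  Integrable.bdd_mul (c := 1) hf hA.aestronglyMeasurable
    (ae_of_all _ fun _ => by simp [abs_of_nonneg measureReal_nonneg, measureReal_le_one])

theorem MeasureTheory.IntegrableOn.mul_measureReal (hf : IntegrableOn f S)
    (hA : Measurable fun x => μ.real (A x)) : IntegrableOn (fun x => f x * μ.real (A x)) S :=
  Integrable.mul_bdd (c := 1) hf hA.aestronglyMeasurable
    (ae_of_all _ fun _ => by simp [abs_of_nonneg measureReal_nonneg, measureReal_le_one])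

theorem integrableOn_Iio_measureReal_Ioi_sub (hμ : Integrable id μ) (t c : ℝ) :
    IntegrableOn (fun s => μ.real (Ioi (t - s))) (Iio c) :=
  (integrableOn_Ioi_measureReal_Ioi hμ (t - c)).comp_sub_left_Iio

theorem integrable_measureReal_Ioi_sub_mul (hμ : Integrable id μ) (t : ℝ) :
    Integrable fun s => μ.real (Ioi (t - s)) * μ.real (Ioi s) := by
  have hleft : IntegrableOn (fun s => μ.real (Ioi (t - s)) * μ.real (Ioi s)) (Iio 0) :=
    (integrableOn_Iio_measureReal_Ioi_sub hμ t 0).mul_measureReal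
      antitone_measureReal_Ioi.measurable
  have hright : IntegrableOn (fun s => μ.real (Ioi (t - s)) * μ.real (Ioi s)) (Ioi (-1)) :=
    (integrableOn_Ioi_measureReal_Ioi hμ (-1)).measureReal_mul
      (monotone_measureReal_Ioi_sub t).measurable
  refine integrableOn_univ.1 ((hleft.union hright).mono_set fun x _ => ?_)
  rcases lt_or_ge x 0 with h | h
  exacts [Or.inl h, Or.inr (by simp; linarith)]

theorem integral_Ioi_conv_sub_integral_Ioi_split (hμ : Integrable id μ) (t z H : ℝ) :
    (∫ s in Ioi z, μ.real (Ioi (t - s)) * μ.real (Ioi s)) - ∫ s in Ioi t, μ.real (Ioi s)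
      = (∫ s in z..H, μ.real (Ioi (t - s)) * μ.real (Ioi s))
        + (∫ s in H..(t - H), μ.real (Ioi (t - s)) * μ.real (Ioi s))
        + (∫ s in 0..H, μ.real (Ioi (t - s)) * μ.real (Ioi s))
        - (∫ s in (-H)..0, μ.real (Ioi (t - s)) * μ.real (Iic s))
        - ∫ s in Iio (-H), μ.real (Ioi (t - s)) * μ.real (Iic s) := by
  have hK := integrable_measureReal_Ioi_sub_mul hμ t
  have hDF : ∀ c, IntegrableOn (fun s => μ.real (Ioi (t - s)) * μ.real (Iic s)) (Iio c) :=
    fun c => (integrableOn_Iio_measureReal_Ioi_sub hμ t c).mul_measureReal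
      monotone_measureReal_Iic.measurable
  have hsplit_Ioi : ∫ s in Ioi z, μ.real (Ioi (t - s)) * μ.real (Ioi s)
      = (∫ s in z..H, μ.real (Ioi (t - s)) * μ.real (Ioi s))
        + (∫ s in H..(t - H), μ.real (Ioi (t - s)) * μ.real (Ioi s))
        + ∫ s in Ioi (t - H), μ.real (Ioi (t - s)) * μ.real (Ioi s) := by
    rw [add_assoc, intervalIntegral.integral_interval_add_Ioi hK.integrableOn hK.integrableOn,
      intervalIntegral.integral_interval_add_Ioi hK.integrableOn hK.integrableOn]
  have hreflect : ∫ s in Ioi (t - H), μ.real (Ioi (t - s)) * μ.real (Ioi s)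
      = ∫ s in Iio H, μ.real (Ioi (t - s)) * μ.real (Ioi s) := by
    simpa [mul_comm] using
      (integral_Iio_comp_sub_left (fun s => μ.real (Ioi s) * μ.real (Ioi (t - s))) t H).symm
  have hsplit_Iio : ∫ s in Iio H, μ.real (Ioi (t - s)) * μ.real (Ioi s)
      = (∫ s in Iio 0, μ.real (Ioi (t - s)) * μ.real (Ioi s))
        + ∫ s in 0..H, μ.real (Ioi (t - s)) * μ.real (Ioi s) := by
    rw [← intervalIntegral.integral_Iio_sub_Iio' hK.integrableOn hK.integrableOn]
    ring
  have htail : ∫ s in Ioi t, μ.real (Ioi s)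
      = (∫ s in Iio 0, μ.real (Ioi (t - s)) * μ.real (Ioi s))
        + ∫ s in Iio 0, μ.real (Ioi (t - s)) * μ.real (Iic s) := by
    rw [← integral_add hK.integrableOn (hDF 0), ← sub_zero t, ← integral_Iio_comp_sub_left,
      sub_zero]
    simp_rw [← mul_add, measureReal_Ioi_add_measureReal_Iic, mul_one]
  have hsplit_cdf : ∫ s in Iio 0, μ.real (Ioi (t - s)) * μ.real (Iic s)
      = (∫ s in Iio (-H), μ.real (Ioi (t - s)) * μ.real (Iic s))
        + ∫ s in (-H)..0, μ.real (Ioi (t - s)) * μ.real (Iic s) := by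
    rw [← intervalIntegral.integral_Iio_sub_Iio' (hDF 0) (hDF (-H))]
    ring
  linarith

theorem integral_Ioi_two_mul_sub_eq (hμ : Integrable id μ) (z H : ℝ) :
    ∫ s in Ioi H, (2 * μ.real (Ioi s) - μ.real (Iic (-s)))
      = ∫ x, x ∂μ + (∫ s in Ioi z, μ.real (Ioi s)) - (∫ s in 0..H, μ.real (Ioi s))
        - (∫ s in z..H, μ.real (Ioi s)) + ∫ s in (-H)..0, μ.real (Iic s) := by
  have hFbar := integrableOn_Ioi_measureReal_Ioi hμ
  have hF := integrableOn_Ioi_measureReal_Iic_neg hμ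
  have h0 := intervalIntegral.integral_interval_add_Ioi (hFbar 0) (hFbar H)
  have hz := intervalIntegral.integral_interval_add_Ioi (hFbar z) (hFbar H)
  have hneg := intervalIntegral.integral_interval_add_Ioi (hF 0) (hF H)
  have hreflect : ∫ s in (-H)..0, μ.real (Iic s) = ∫ s in 0..H, μ.real (Iic (-s)) := by
    simp [intervalIntegral.integral_comp_neg (fun s => μ.real (Iic s))]
  rw [integral_sub ((hFbar H).const_mul 2) (hF H), integral_const_mul,
    integral_id_eq_integral_Ioi_sub hμ]
  linarith

theorem integral_Ioi_conv_sub_integral_Ioi_eq (hμ : Integrable id μ) (t z H : ℝ)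
    (hz : ∫ s in Ioi z, μ.real (Ioi s) = -∫ x, x ∂μ) :
    (∫ s in Ioi z, μ.real (Ioi (t - s)) * μ.real (Ioi s)) - ∫ s in Ioi t, μ.real (Ioi s)
      = (∫ s in H..(t - H), μ.real (Ioi (t - s)) * μ.real (Ioi s))
        - μ.real (Ioi t) * (∫ s in Ioi H, (2 * μ.real (Ioi s) - μ.real (Iic (-s))))
        + ((∫ s in 0..H, (μ.real (Ioi (t - s)) - μ.real (Ioi t)) * μ.real (Ioi s))
          + (∫ s in z..H, (μ.real (Ioi (t - s)) - μ.real (Ioi t)) * μ.real (Ioi s))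
          + ∫ s in (-H)..0, (μ.real (Ioi t) - μ.real (Ioi (t - s))) * μ.real (Iic s))
        - ∫ s in Iio (-H), μ.real (Ioi (t - s)) * μ.real (Iic s) := by
  have hK : ∀ a b : ℝ,
      IntervalIntegrable (fun s => μ.real (Ioi (t - s)) * μ.real (Ioi s)) volume a b :=
    fun _ _ => (integrable_measureReal_Ioi_sub_mul hμ t).intervalIntegrable
  have hFbar : ∀ a b : ℝ,
      IntervalIntegrable (fun s => μ.real (Ioi t) * μ.real (Ioi s)) volume a b :=
    fun _ _ => antitone_measureReal_Ioi.intervalIntegrable.const_mul _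
  have hF : IntervalIntegrable (fun s => μ.real (Ioi t) * μ.real (Iic s)) volume (-H) 0 :=
    monotone_measureReal_Iic.intervalIntegrable.const_mul _
  have hDF : IntervalIntegrable (fun s => μ.real (Ioi (t - s)) * μ.real (Iic s)) volume (-H) 0 :=
    ((monotone_measureReal_Ioi_sub t).mul monotone_measureReal_Iic
      (fun _ => measureReal_nonneg) fun _ => measureReal_nonneg).intervalIntegrable
  simp_rw [sub_mul]
  rw [intervalIntegral.integral_sub (hK 0 H) (hFbar 0 H),
    intervalIntegral.integral_sub (hK z H) (hFbar z H),
    intervalIntegral.integral_sub hF hDF, intervalIntegral.integral_const_mul,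
    intervalIntegral.integral_const_mul, intervalIntegral.integral_const_mul,
    integral_Ioi_two_mul_sub_eq hμ z H, integral_Ioi_conv_sub_integral_Ioi_split hμ t z H, hz]
  ring

end Tails

section ResidualLifeLaw

variable {g : ℝ → ℝ} {a : ℝ}

theorem Antitone.apply_sInf_setOf_lt_eq {φ : ℝ → ℝ} (hφ : Antitone φ) (hcont : Continuous φ)
    (hlo : ∃ c, φ c < a) (hhi : ∃ c, a ≤ φ c) : φ (sInf {c | φ c < a}) = a := by
  obtain ⟨c₁, hc₁⟩ := hhi
  have hbdd : BddBelow {c | φ c < a} :=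
    ⟨c₁, fun x (hx : φ x < a) => le_of_not_gt fun hlt => (hφ hlt.le).not_gt (hx.trans_le hc₁)⟩
  apply le_antisymm
  · exact closure_minimal (fun x (hx : φ x < a) => hx.le) (isClosed_le hcont continuous_const)
      (csInf_mem_closure hlo hbdd)
  · by_contra! h
    set z := sInf {c | φ c < a}
    have hnear : ∀ᶠ x in 𝓝[<] z, φ x < a ∧ x < z :=
      (((hcont.tendsto z).eventually (gt_mem_nhds h)).filter_mono nhdsWithin_le_nhds).and
        self_mem_nhdsWithin
    obtain ⟨x, hx, hlt⟩ := hnear.exists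
    exact notMem_of_lt_csInf hlt hbdd hx

theorem antitone_integral_Ioi (hg : ∀ s, 0 ≤ g s) (hgi : ∀ c, IntegrableOn g (Ioi c)) :
    Antitone fun c => ∫ s in Ioi c, g s :=
  fun x _ hxy => setIntegral_mono_set (hgi x) (ae_of_all _ fun s => hg s)
    (Ioi_subset_Ioi hxy).eventuallyLE

theorem continuous_integral_Ioi (hgi : ∀ c, IntegrableOn g (Ioi c)) :
    Continuous fun c => ∫ s in Ioi c, g s :=
  continuous_iff_continuousAt.2 fun c => ((hgi (c - 1)).continuousOn_Ici_primitive_Ioi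
    ).continuousAt (Ici_mem_nhds (by linarith))

theorem tendsto_integral_Ioi_atTop {c₀ : ℝ} (hgi : IntegrableOn g (Ioi c₀)) :
    Tendsto (fun c => ∫ s in Ioi c, g s) atTop (𝓝 0) := by
  have := (tendsto_const_nhds (x := ∫ s in Ioi c₀, g s)).sub
    (intervalIntegral_tendsto_integral_Ioi c₀ hgi tendsto_id)
  rw [sub_self] at this
  refine this.congr' ((eventually_ge_atTop c₀).mono fun c hc => ?_)
  simp [← intervalIntegral.integral_Ioi_sub_Ioi hgi hc]

theorem integral_Ioi_sInf_setOf_lt_eq (hg : ∀ s, 0 ≤ g s) (hgi : ∀ c, IntegrableOn g (Ioi c))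
    (ha : 0 < a) (hhi : ∃ c, a ≤ ∫ s in Ioi c, g s) :
    ∫ s in Ioi (sInf {c | ∫ s in Ioi c, g s < a}), g s = a :=
  (antitone_integral_Ioi hg hgi).apply_sInf_setOf_lt_eq (continuous_integral_Ioi hgi)
    ((tendsto_integral_Ioi_atTop (hgi 0)).eventually (gt_mem_nhds ha)).exists hhi

theorem min_one_one_div_mul_integral_Ioi (hg : ∀ s, 0 ≤ g s)
    (hgi : ∀ c, IntegrableOn g (Ioi c)) (ha : 0 < a) {z : ℝ} (hz : ∫ s in Ioi z, g s = a)
    (u : ℝ) : min 1 ((1 / a) * ∫ s in Ioi u, g s) = (∫ s in Ioi (max z u), g s) / a := by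
  rw [one_div, inv_mul_eq_div]
  rcases le_total u z with huz | hzu
  · rw [max_eq_left huz, hz, div_self ha.ne', min_eq_left]
    rw [one_le_div ha, ← hz]
    exact antitone_integral_Ioi hg hgi huz
  · rw [max_eq_right hzu, min_eq_right]
    rw [div_le_one ha, ← hz]
    exact antitone_integral_Ioi hg hgi hzu

theorem eq_withDensity_of_measureReal_Ioi {ν : Measure ℝ} [IsProbabilityMeasure ν] {z : ℝ}
    (hg : ∀ s, 0 ≤ g s) (hgi : ∀ c, IntegrableOn g (Ioi c)) (ha : 0 < a)
    (hz : ∫ s in Ioi z, g s = a)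
    (hν : ∀ u, ν.real (Ioi u) = min 1 ((1 / a) * ∫ s in Ioi u, g s)) :
    ν = volume.withDensity ((Ioi z).indicator fun s => ENNReal.ofReal (g s / a)) := by
  set ρ := volume.withDensity ((Ioi z).indicator fun s => ENNReal.ofReal (g s / a))
  have hρ : ∀ A, MeasurableSet A → ρ A = ENNReal.ofReal ((∫ s in Ioi z ∩ A, g s) / a) := by
    intro A hA
    rw [withDensity_apply _ hA, lintegral_indicator measurableSet_Ioi,
      Measure.restrict_restrict measurableSet_Ioi, ← integral_div,
      ofReal_integral_eq_lintegral_ofReal (((hgi z).mono_set inter_subset_left).div_const a)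
        (ae_of_all _ fun s => div_nonneg (hg s) ha.le)]
  have : IsProbabilityMeasure ρ :=
    ⟨by rw [hρ univ MeasurableSet.univ, inter_univ, hz, div_self ha.ne', ENNReal.ofReal_one]⟩
  have hIoi : ∀ u, ν (Ioi u) = ρ (Ioi u) := fun u => by
    rw [← ofReal_measureReal, hν, hρ _ measurableSet_Ioi, Ioi_inter_Ioi,
      min_one_one_div_mul_integral_Ioi hg hgi ha hz]
  refine Measure.ext_of_Iic ν ρ fun x => ?_
  rw [← compl_Ioi, prob_compl_eq_one_sub measurableSet_Ioi,
    prob_compl_eq_one_sub measurableSet_Ioi, hIoi]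

end ResidualLifeLaw

theorem integral_Ioi_sInf_setOf_measure_Ioi_lt_one {μ ν : Measure ℝ} [IsProbabilityMeasure μ]
    [IsFiniteMeasure ν] (hμ : Integrable id μ) (hmean : ∫ x, x ∂μ < 0)
    (hν : ∀ u, ν.real (Ioi u) = min 1 ((1 / |∫ x, x ∂μ|) * ∫ s in Ioi u, μ.real (Ioi s))) :
    ∫ s in Ioi (sInf {u | ν (Ioi u) < 1}), μ.real (Ioi s) = |∫ x, x ∂μ| := by
  have ha : 0 < |∫ x, x ∂μ| := abs_pos.2 hmean.ne
  have hset : {u | ν (Ioi u) < 1} = {u | ∫ s in Ioi u, μ.real (Ioi s) < |∫ x, x ∂μ|} := by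
    ext u
    rw [mem_ofPred_eq, mem_ofPred_eq, ← ofReal_measureReal, ENNReal.ofReal_lt_one, hν u,
      min_lt_iff, one_div, inv_mul_lt_iff₀ ha]
    simp
  have hlarge := neg_add_integral_id_le_integral_Ioi hμ (-2 * |∫ x, x ∂μ|)
  rw [hset]
  exact integral_Ioi_sInf_setOf_lt_eq (fun _ => measureReal_nonneg)
    (integrableOn_Ioi_measureReal_Ioi hμ) ha
    ⟨_, by linarith [abs_of_neg hmean]⟩

theorem measureReal_lt_add_eq_integral {Ω : Type*} [MeasurableSpace Ω] {P : Measure Ω}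
    [IsProbabilityMeasure P] {X Z : Ω → ℝ} (hX : Measurable X) (hZ : Measurable Z)
    (hXZ : IndepFun X Z P) {g : ℝ → ℝ} {z : ℝ} (hg : ∀ s, 0 ≤ g s) (hgi : IntegrableOn g (Ioi z))
    (hZlaw : P.map Z = volume.withDensity ((Ioi z).indicator fun s => ENNReal.ofReal (g s)))
    (t : ℝ) : P.real {ω | t < X ω + Z ω} = ∫ s in Ioi z, (P.map X).real (Ioi (t - s)) * g s := by
  have : IsProbabilityMeasure (P.map X) := Measure.isProbabilityMeasure_map hX.aemeasurable
  have hS : MeasurableSet {p : ℝ × ℝ | t < p.1 + p.2} :=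
    measurableSet_lt measurable_const (measurable_fst.add measurable_snd)
  have hconv : P {ω | t < X ω + Z ω} = ∫⁻ s, P.map X (Ioi (t - s)) ∂(P.map Z) := by
    rw [show {ω | t < X ω + Z ω} = (fun ω => (X ω, Z ω)) ⁻¹' {p | t < p.1 + p.2} from rfl,
      ← Measure.map_apply (hX.prodMk hZ) hS,
      (indepFun_iff_map_prod_eq_prod_map_map hX.aemeasurable hZ.aemeasurable).1 hXZ,
      Measure.prod_apply_symm hS]
    congr! with s
    ext x
    simp [sub_lt_iff_lt_add]
  have hint : IntegrableOn (fun s => (P.map X).real (Ioi (t - s)) * g s) (Ioi z) :=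
    hgi.measureReal_mul (monotone_measureReal_Ioi_sub t).measurable
  have hnonneg : ∀ s, 0 ≤ (P.map X).real (Ioi (t - s)) * g s :=
    fun s => mul_nonneg measureReal_nonneg (hg s)
  have hmono : Monotone fun s => P.map X (Ioi (t - s)) :=
    fun _ _ h => measure_mono (Ioi_subset_Ioi (sub_le_sub_left h t))
  rw [measureReal_def, hconv, hZlaw, lintegral_withDensity_eq_lintegral_mul₀
      ((aemeasurable_indicator_iff measurableSet_Ioi).2 hgi.aemeasurable.ennreal_ofReal)
      hmono.measurable.aemeasurable, ← ENNReal.toReal_ofReal (integral_nonneg hnonneg),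
    ofReal_integral_eq_lintegral_ofReal hint (ae_of_all _ hnonneg),
    ← lintegral_indicator measurableSet_Ioi]
  congr 1
  refine lintegral_congr fun s => ?_
  by_cases hs : s ∈ Ioi z
  · simp [hs, ENNReal.ofReal_mul (hg s), mul_comm]
  · simp [hs]

theorem stmt3_general
    {Ω : Type*} [MeasurableSpace Ω] (P : Measure Ω) [IsProbabilityMeasure P]
    (X Z : Ω → ℝ) (hXm : Measurable X) (hZm : Measurable Z)
    (hXint : Integrable X P) (hXmean : ∫ ω, X ω ∂P < 0)
    (Fbar F : ℝ → ℝ)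
    (hFbar : ∀ t, Fbar t = (P {ω | X ω > t}).toReal)
    (hF : ∀ t, F t = (P {ω | X ω ≤ t}).toReal)
    (hindep : IndepFun X Z P)
    (hZlaw : ∀ t : ℝ, (P {ω | Z ω > t}).toReal
        = min 1 ((1 / |∫ ω, X ω ∂P|) * ∫ s in Set.Ioi t, Fbar s))
    (z0 : ℝ) (hz0 : z0 = sInf {t : ℝ | P {ω | Z ω > t} < 1})
    (h : ℝ → ℝ)
    (p q e1 e2 : ℝ → ℝ)
    (hp : ∀ t, p t = (1 / |∫ ω, X ω ∂P|)
        * ∫ s in (h t)..(t - h t), Fbar (t - s) * Fbar s)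
    (hq : ∀ t, q t = (Fbar t / |∫ ω, X ω ∂P|)
        * ∫ s in Set.Ioi (h t), (2 * Fbar s - F (-s)))
    (he1 : ∀ t, e1 t = (1 / |∫ ω, X ω ∂P|) *
        ((∫ s in (0:ℝ)..(h t), (Fbar (t - s) - Fbar t) * Fbar s)
          + (∫ s in z0..(h t), (Fbar (t - s) - Fbar t) * Fbar s)
          + ∫ s in (-(h t))..(0:ℝ), (Fbar t - Fbar (t - s)) * F s))
    (he2 : ∀ t, e2 t = (1 / |∫ ω, X ω ∂P|)
        * ∫ s in Set.Iio (-(h t)), Fbar (t - s) * F s) :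
    ∀ t > max (2 * z0) 0,
      (P {ω | X ω + Z ω > t}).toReal - (P {ω | Z ω > t}).toReal
        = p t - q t + e1 t - e2 t := by
  intro t ht
  set μ := P.map X
  have : IsProbabilityMeasure μ := Measure.isProbabilityMeasure_map hXm.aemeasurable
  have : IsProbabilityMeasure (P.map Z) := Measure.isProbabilityMeasure_map hZm.aemeasurable
  have hμ : Integrable id μ :=
    (integrable_map_measure aestronglyMeasurable_id hXm.aemeasurable).2 hXint
  have hmean : ∫ ω, X ω ∂P = ∫ x, x ∂μ :=
    (integral_map hXm.aemeasurable measurable_id'.aestronglyMeasurable).symm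
  obtain rfl : Fbar = fun s => μ.real (Ioi s) :=
    funext fun s => by rw [hFbar, map_measureReal_apply hXm measurableSet_Ioi]; rfl
  obtain rfl : F = fun s => μ.real (Iic s) :=
    funext fun s => by rw [hF, map_measureReal_apply hXm measurableSet_Iic]; rfl
  have hZ : ∀ u, P {ω | Z ω > u} = P.map Z (Ioi u) :=
    fun u => (Measure.map_apply hZm measurableSet_Ioi).symm
  simp only [hZ, hmean, ← measureReal_def] at hXmean hZlaw hz0 hp hq he1 he2 ⊢
  set a := |∫ x, x ∂μ|
  have ha : 0 < a := abs_pos.2 hXmean.ne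
  have htail := integrableOn_Ioi_measureReal_Ioi hμ
  have hz0a : ∫ s in Ioi z0, μ.real (Ioi s) = a :=
    hz0 ▸ integral_Ioi_sInf_setOf_measure_Ioi_lt_one hμ hXmean hZlaw
  have hXZ := measureReal_lt_add_eq_integral hXm hZm hindep
    (fun _ => div_nonneg measureReal_nonneg ha.le) ((htail z0).div_const a)
    (eq_withDensity_of_measureReal_Ioi (fun _ => measureReal_nonneg) htail ha hz0a hZlaw) t
  have hz0t : z0 ≤ t := by
    rcases le_total z0 0 with hz | hz <;> cases max_lt_iff.1 ht <;> linarith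
  have key := integral_Ioi_conv_sub_integral_Ioi_eq hμ t z0 (h t)
    (hz0a.trans (abs_of_neg hXmean))
  simp only [gt_iff_lt]
  rw [hXZ, hZlaw, min_one_one_div_mul_integral_Ioi (fun _ => measureReal_nonneg) htail ha hz0a,
    max_eq_right hz0t, hp, hq, he1, he2]
  simp_rw [mul_div_assoc']
  rw [integral_div]
  field_simp
  linear_combination key

/-- decomposition, Lemma 5.1 of the paper.
For a random variable `X` with finite, negative mean and `Z` independent of `X`
with the residual-life distribution of `X`, and any function `h` with
`max{z₀,0} < h(t) < t/2` for `t > max{2z₀,0}`, the difference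
`P(X+Z>t) − P(Z>t)` decomposes as `p(t) − q(t) + ε₁(t) − ε₂(t)`. -/
theorem stmt3
    {Ω : Type*} [MeasurableSpace Ω] (P : Measure Ω) [IsProbabilityMeasure P]
    (X Z : Ω → ℝ) (hXm : Measurable X) (hZm : Measurable Z)
    (hXint : Integrable X P) (hXmean : ∫ ω, X ω ∂P < 0)
    (Fbar F : ℝ → ℝ)
    (hFbar : ∀ t, Fbar t = (P {ω | X ω > t}).toReal)
    (hF : ∀ t, F t = (P {ω | X ω ≤ t}).toReal)
    (hindep : IndepFun X Z P)
    (hZlaw : ∀ t : ℝ, (P {ω | Z ω > t}).toReal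
        = min 1 ((1 / |∫ ω, X ω ∂P|) * ∫ s in Set.Ioi t, Fbar s))
    (z0 : ℝ) (hz0 : z0 = sInf {t : ℝ | P {ω | Z ω > t} < 1})
    (h : ℝ → ℝ) (hh : ∀ t > max (2 * z0) 0, max z0 0 < h t ∧ h t < t / 2)
    (p q e1 e2 : ℝ → ℝ)
    (hp : ∀ t, p t = (1 / |∫ ω, X ω ∂P|)
        * ∫ s in (h t)..(t - h t), Fbar (t - s) * Fbar s)
    (hq : ∀ t, q t = (Fbar t / |∫ ω, X ω ∂P|)
        * ∫ s in Set.Ioi (h t), (2 * Fbar s - F (-s)))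
    (he1 : ∀ t, e1 t = (1 / |∫ ω, X ω ∂P|) *
        ((∫ s in (0:ℝ)..(h t), (Fbar (t - s) - Fbar t) * Fbar s)
          + (∫ s in z0..(h t), (Fbar (t - s) - Fbar t) * Fbar s)
          + ∫ s in (-(h t))..(0:ℝ), (Fbar t - Fbar (t - s)) * F s))
    (he2 : ∀ t, e2 t = (1 / |∫ ω, X ω ∂P|)
        * ∫ s in Set.Iio (-(h t)), Fbar (t - s) * F s) :
    ∀ t > max (2 * z0) 0,
      (P {ω | X ω + Z ω > t}).toReal - (P {ω | Z ω > t}).toReal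
        = p t - q t + e1 t - e2 t :=
  stmt3_general P X Z hXm hZm hXint hXmean Fbar F hFbar hF hindep hZlaw z0 hz0 h p q e1 e2 hp hq he1
    he2
end

section
/- Assume (A1)–(A3) hold with tail index α ∈ (1, 2), and let h be a function as in (A2) which additionally satisfies max{z₀, 0} < h(t) < t/2 for all t > max{2z₀, 0}. Define ε₂(t) := (1/|E X|) ∫_{−∞}^{−h(t)} F̄(t−s)·F(s) ds. Then ε₂(t) = o(t·F̄(t)²) as t → ∞. -/
open MeasureTheory ProbabilityTheory Filter Set Asymptotics
open scoped ENNReal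

/-! For `s < -h(t) ≤ 0` monotonicity gives `F̄(t - s) ≤ F̄(t)`, so after the substitution
`s ↦ -s` the integral defining `ε₂(t)` is at most `F̄(t) ∫_{h(t)}^∞ P(X ≤ -s) ds`, and by (A2)
this last integral is `o(t F̄(t))`. It is finite because `P(X ≤ -s) ≤ P(|X| ≥ s)` and
`∫_0^∞ P(|X| ≥ s) ds = E|X|`. -/

theorem integrableOn_Ioi_measureReal_le_neg {Ω : Type*} [MeasurableSpace Ω] {μ : Measure Ω}
    {X : Ω → ℝ} (hX : Integrable X μ) :
    IntegrableOn (fun s => μ.real {ω | X ω ≤ -s}) (Ioi 0) := by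
  have hmono : Antitone fun s : ℝ => μ {ω | X ω ≤ -s} :=
    fun s s' hss' => measure_mono fun ω (hω : X ω ≤ -s') => (by linarith : X ω ≤ -s)
  refine integrable_toReal_of_lintegral_ne_top hmono.measurable.aemeasurable (ne_of_lt ?_)
  calc ∫⁻ s in Ioi 0, μ {ω | X ω ≤ -s}
      ≤ ∫⁻ s in Ioi 0, μ {ω | s ≤ |X ω|} :=
        lintegral_mono fun s => measure_mono fun ω (hω : X ω ≤ -s) =>
          (show s ≤ |X ω| by linarith [neg_abs_le (X ω)])
    _ = ∫⁻ ω, ‖X ω‖ₑ ∂μ := by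
        simp_rw [Real.enorm_eq_ofReal_abs]
        exact (lintegral_eq_lintegral_meas_le μ (ae_of_all _ fun ω => abs_nonneg (X ω))
          hX.aemeasurable.abs).symm
    _ < ∞ := hX.2

theorem setIntegral_Ioi_antitone_mul_le {G H : ℝ → ℝ} (hG : Antitone G) (hG0 : 0 ≤ G)
    (hH0 : 0 ≤ H) {a : ℝ} (ha : 0 ≤ a) (hH : IntegrableOn H (Ioi a)) (t : ℝ) :
    ∫ s in Ioi a, G (t + s) * H s ≤ G t * ∫ s in Ioi a, H s := by
  rw [← integral_const_mul]
  refine integral_mono_of_nonneg (ae_of_all _ fun s => mul_nonneg (hG0 _) (hH0 s))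
    (hH.const_mul _) ((ae_restrict_iff' measurableSet_Ioi).2 (ae_of_all _ fun s hs => ?_))
  exact mul_le_mul_of_nonneg_right (hG (by linarith [mem_Ioi.1 hs])) (hH0 s)

theorem stmt6_general
    {Ω : Type*} [MeasurableSpace Ω] (P : Measure Ω) [IsProbabilityMeasure P]
    (X : Ω → ℝ)
    (hXint : Integrable X P)
    (Fbar F : ℝ → ℝ)
    (hFbar : ∀ t, Fbar t = (P {ω | X ω > t}).toReal)
    (hF : ∀ t, F t = (P {ω | X ω ≤ t}).toReal)
    (h : ℝ → ℝ)
    (hhtop : Tendsto h atTop atTop)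
    (hhA2 : (fun t => ∫ s in Set.Ioi (h t), (P {ω | X ω ≤ -s}).toReal) =o[atTop]
        fun t => t * Fbar t)
    (e2 : ℝ → ℝ)
    (he2 : ∀ t, e2 t = (1 / |∫ ω, X ω ∂P|)
        * ∫ s in Set.Iio (-(h t)), Fbar (t - s) * F s) :
    e2 =o[atTop] fun t => t * Fbar t ^ 2 := by
  have hFbar_anti : Antitone Fbar := fun s s' hss' => by
    simp only [hFbar]
    exact measureReal_mono (fun ω (hω : s' < X ω) => show s < X ω by linarith)
  have hFbar_nonneg : 0 ≤ Fbar := fun s => (hFbar s).symm ▸ ENNReal.toReal_nonneg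
  have hreflect : ∀ t, ∫ s in Iio (-(h t)), Fbar (t - s) * F s
      = ∫ s in Ioi (h t), Fbar (t + s) * P.real {ω | X ω ≤ -s} := fun t => by
    rw [← integral_Iic_eq_integral_Iio, ← integral_comp_neg_Ioi]
    simp only [sub_neg_eq_add, hF, measureReal_def]
  have hbound : ∀ᶠ t in atTop, ‖∫ s in Iio (-(h t)), Fbar (t - s) * F s‖
      ≤ ‖Fbar t * ∫ s in Ioi (h t), P.real {ω | X ω ≤ -s}‖ := by
    filter_upwards [hhtop.eventually_ge_atTop 0] with t ht
    have hint := (integrableOn_Ioi_measureReal_le_neg hXint).mono_set (Ioi_subset_Ioi ht)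
    rw [hreflect, Real.norm_eq_abs, Real.norm_eq_abs]
    exact abs_le_abs_of_nonneg
      (setIntegral_nonneg measurableSet_Ioi fun _ _ =>
        mul_nonneg (hFbar_nonneg _) measureReal_nonneg)
      (setIntegral_Ioi_antitone_mul_le hFbar_anti hFbar_nonneg
        (fun _ => measureReal_nonneg) ht hint t)
  have hmain := ((IsBigO.of_bound' hbound).trans_isLittleO
    ((isBigO_refl Fbar atTop).mul_isLittleO hhA2)).const_mul_left (1 / |∫ ω, X ω ∂P|)
  rw [funext he2]
  exact hmain.congr_right fun t => by ring

/-- Under (A1)–(A3) with `α ∈ (1,2)` and `h` as in (A2) with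
`max{z₀,0} < h(t) < t/2` for `t > max{2z₀,0}`, the error term `ε₂` satisfies
`ε₂(t) = o(t·F̄(t)²)` as `t → ∞`. -/
theorem stmt6
    {Ω : Type*} [MeasurableSpace Ω] (P : Measure Ω) [IsProbabilityMeasure P]
    (X Z : Ω → ℝ) (hXm : Measurable X) (hZm : Measurable Z)
    (hXint : Integrable X P) (hXmean : ∫ ω, X ω ∂P < 0)
    (hXsupp : ∀ t : ℝ, 0 < P {ω | X ω > t})
    (Fbar F : ℝ → ℝ)
    (hFbar : ∀ t, Fbar t = (P {ω | X ω > t}).toReal)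
    (hF : ∀ t, F t = (P {ω | X ω ≤ t}).toReal)
    (hindep : IndepFun X Z P)
    (hZlaw : ∀ t : ℝ, (P {ω | Z ω > t}).toReal
        = min 1 ((1 / |∫ ω, X ω ∂P|) * ∫ s in Set.Ioi t, Fbar s))
    (z0 : ℝ) (hz0 : z0 = sInf {t : ℝ | P {ω | Z ω > t} < 1})
    (α : ℝ) (hα1 : 1 < α) (hα2 : α < 2)
    (hA1 : ∀ u : ℝ, 0 < u →
      Tendsto (fun t => Fbar (u * t) / Fbar t) atTop (nhds (u ^ (-α))))
    (hA3 : ∃ f : ℝ → ℝ, Continuous f ∧ (∀ x, 0 ≤ f x) ∧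
      P.map X = volume.withDensity (fun x => ENNReal.ofReal (f x)) ∧
      ∀ u : ℝ, 0 < u →
        Tendsto (fun t => f (u * t) / f t) atTop (nhds (u ^ (-(α + 1)))))
    (h : ℝ → ℝ)
    (hhtop : Tendsto h atTop atTop) (hho : h =o[atTop] (fun t => t))
    (hhA2 : (fun t => ∫ s in Set.Ioi (h t), (P {ω | X ω ≤ -s}).toReal) =o[atTop]
        fun t => t * Fbar t)
    (hhb : ∀ t > max (2 * z0) 0, max z0 0 < h t ∧ h t < t / 2)
    (e2 : ℝ → ℝ)
    (he2 : ∀ t, e2 t = (1 / |∫ ω, X ω ∂P|)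
        * ∫ s in Set.Iio (-(h t)), Fbar (t - s) * F s) :
    e2 =o[atTop] fun t => t * Fbar t ^ 2 :=
  stmt6_general P X hXint Fbar F hFbar hF h hhtop hhA2 e2 he2
end

section
/- For α ∈ (1, 2) define G(α) := ∫_0^{1/2} ((1−u)^{−α} − 1)·u^{−α} du − 2^{α−1}/(α−1). Then G(α) < 0 for every α ∈ (1, 3/2), G(3/2) = 0, and G(α) > 0 for every α ∈ (3/2, 2). -/
/-!
Let `k(u) = u^(1-α) - (1-u)^(1-α)`, positive on `(0, 1/2)`. Integrating by parts against
`H(u) = (u^(1-α) ((1-u)^(1-α) - 1) - (1-u)^(2-2α)) / (1-α)` gives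
`G(α) = 2 ∫₀^{1/2} k(u) (1-u)^(-α) du - 1/(α-1)`,
while `∫₀^{1/2} k(u) (1-u)^(α-3) du = 1/(2-α) - 1` in closed form. Hence
`G(α) = 2 ∫₀^{1/2} k(u) ((1-u)^(-α) - (1-u)^(α-3)) du + α(2α-3) / ((α-1)(2-α))`,
and both terms have the sign of `α - 3/2`, since `(1-u)^(-α) ≷ (1-u)^(α-3)`
exactly when `α ≷ 3/2`.
-/

open MeasureTheory Filter Set intervalIntegral Topology

lemma one_le_one_sub_rpow {p u : ℝ} (hp : p ≤ 0) (hu0 : 0 ≤ u) (hu1 : u < 1) :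
    1 ≤ (1 - u) ^ p :=
  Real.one_le_rpow_of_pos_of_le_one_of_nonpos (by linarith) (by linarith) hp

lemma one_sub_rpow_le {p u : ℝ} (hp : -2 ≤ p) (hu0 : 0 ≤ u) (hu : u ≤ 1 / 2) :
    (1 - u) ^ p ≤ 1 + 8 * u := by
  have hv : 0 < 1 - u := by linarith
  calc (1 - u) ^ p ≤ (1 - u) ^ (-2 : ℝ) :=
        Real.rpow_le_rpow_of_exponent_ge hv (by linarith) hp
    _ = 1 / (1 - u) ^ 2 := by rw [Real.rpow_neg hv.le, one_div]; norm_cast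
    _ ≤ 1 + 8 * u := by
        rw [div_le_iff₀ (by positivity)]; nlinarith [mul_nonneg hu0 (mul_nonneg hu0 hu0)]

lemma continuousOn_one_sub_rpow (p : ℝ) :
    ContinuousOn (fun u : ℝ => (1 - u) ^ p) (Icc 0 (1 / 2)) :=
  ContinuousOn.rpow_const (by fun_prop) fun u hu => Or.inl (sub_ne_zero.2 (by linarith [hu.2]))

lemma hasDerivAt_one_sub_rpow (p : ℝ) {u : ℝ} (hu : u < 1) :
    HasDerivAt (fun x : ℝ => (1 - x) ^ p) (-(p * (1 - u) ^ (p - 1))) u := by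
  simpa using ((hasDerivAt_id u).const_sub 1).rpow_const (p := p) (Or.inl (sub_ne_zero.2 hu.ne'))

lemma intervalIntegrable_rpow_one_sub_sub_mul {α : ℝ} (hα : α < 2) {g : ℝ → ℝ}
    (hg : ContinuousOn g (Icc 0 (1 / 2))) :
    IntervalIntegrable (fun u => (u ^ (1 - α) - (1 - u) ^ (1 - α)) * g u) volume 0 (1 / 2) := by
  have hs := continuousOn_one_sub_rpow (1 - α)
  rw [← uIcc_of_le (by norm_num)] at hg hs
  exact ((intervalIntegrable_rpow' (by linarith)).sub hs.intervalIntegrable).mul_continuousOn hg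

lemma intervalIntegrable_one_sub_rpow_neg_sub_one_mul_rpow_neg {α : ℝ} (h0 : 0 ≤ α)
    (h2 : α < 2) :
    IntervalIntegrable (fun u => ((1 - u) ^ (-α) - 1) * u ^ (-α)) volume 0 (1 / 2) := by
  refine ((intervalIntegrable_rpow' (show -1 < 1 - α by linarith)).const_mul 8).mono_fun' ?_ ?_
  · fun_prop
  · rw [uIoc_of_le (by norm_num), EventuallyLE, ae_restrict_iff' measurableSet_Ioc]
    refine ae_of_all _ fun u ⟨hu0, hu⟩ => ?_
    have hpow : u ^ (1 - α) = u * u ^ (-α) := by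
      rw [show 1 - α = -α + 1 by ring, Real.rpow_add_one hu0.ne']; ring
    have hw := Real.rpow_nonneg hu0.le (-α)
    have hs := one_le_one_sub_rpow (neg_nonpos.2 h0) hu0.le (by linarith)
    rw [Real.norm_of_nonneg (mul_nonneg (by linarith) hw), hpow]
    nlinarith [one_sub_rpow_le (show -2 ≤ -α by linarith) hu0.le hu]

lemma tendsto_rpow_mul_one_sub_rpow_sub_one {α : ℝ} (h1 : 1 ≤ α) (h2 : α < 2) :
    Tendsto (fun u : ℝ => u ^ (1 - α) * ((1 - u) ^ (1 - α) - 1)) (𝓝[>] 0) (𝓝 0) := by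
  have hsmall : ∀ᶠ u in 𝓝[>] (0 : ℝ), u ∈ Ioc 0 (1 / 2) := Ioc_mem_nhdsGT (by norm_num)
  have hlim : Tendsto (fun u : ℝ => 8 * u ^ (2 - α)) (𝓝[>] 0) (𝓝 0) := by
    have h := (Real.continuousAt_rpow_const 0 (2 - α) (Or.inr (by linarith))).tendsto
    rw [Real.zero_rpow (by linarith)] at h
    simpa using (h.mono_left nhdsWithin_le_nhds).const_mul 8
  refine squeeze_zero' ?_ ?_ hlim
  · filter_upwards [hsmall] with u ⟨hu0, hu⟩
    exact mul_nonneg (Real.rpow_nonneg hu0.le _)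
      (sub_nonneg.2 (one_le_one_sub_rpow (by linarith) hu0.le (by linarith)))
  · filter_upwards [hsmall] with u ⟨hu0, hu⟩
    have hpow : u ^ (2 - α) = u * u ^ (1 - α) := by
      rw [show 2 - α = (1 - α) + 1 by ring, Real.rpow_add_one hu0.ne']; ring
    rw [hpow]
    nlinarith [one_sub_rpow_le (show -2 ≤ 1 - α by linarith) hu0.le hu,
      Real.rpow_nonneg hu0.le (1 - α)]

lemma integral_one_sub_rpow_neg_sub_one_mul_rpow_neg {α : ℝ} (h1 : 1 < α) (h2 : α < 2) :
    ∫ u in (0 : ℝ)..(1 / 2), ((1 - u) ^ (-α) - 1) * u ^ (-α) =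
      2 * (∫ u in (0 : ℝ)..(1 / 2), (u ^ (1 - α) - (1 - u) ^ (1 - α)) * (1 - u) ^ (-α)) +
        ((1 / 2) ^ (1 - α) - 1) / (α - 1) := by
  have hα : 1 - α ≠ 0 := by linarith
  have hα' : α - 1 ≠ 0 := by linarith
  set H : ℝ → ℝ := fun u =>
    (u ^ (1 - α) * ((1 - u) ^ (1 - α) - 1) - ((1 - u) ^ (1 - α)) ^ 2) / (1 - α) with hH
  have hK := intervalIntegrable_rpow_one_sub_sub_mul h2 (continuousOn_one_sub_rpow (-α))
  have hderiv : ∀ u ∈ Ioo (0 : ℝ) (1 / 2), HasDerivAt H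
      (((1 - u) ^ (-α) - 1) * u ^ (-α)
        - 2 * ((u ^ (1 - α) - (1 - u) ^ (1 - α)) * (1 - u) ^ (-α))) u := by
    rintro u ⟨hu0, hu⟩
    have hv : 0 < 1 - u := by linarith
    have hs := hasDerivAt_one_sub_rpow (1 - α) (show u < 1 by linarith)
    refine ((((Real.hasDerivAt_rpow_const (p := 1 - α) (Or.inl hu0.ne')).mul
      (hs.sub_const 1)).sub (hs.pow 2)).div_const (1 - α)).congr_deriv ?_
    have e1 : u ^ (1 - α) = u * u ^ (-α) := by
      rw [show 1 - α = -α + 1 by ring, Real.rpow_add_one hu0.ne']; ring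
    have e2 : (1 - u) ^ (1 - α) = (1 - u) * (1 - u) ^ (-α) := by
      rw [show 1 - α = -α + 1 by ring, Real.rpow_add_one hv.ne']; ring
    rw [show 1 - α - 1 = -α by ring, e1, e2]
    field_simp
    ring
  have hint : IntervalIntegrable (fun u : ℝ => ((1 - u) ^ (-α) - 1) * u ^ (-α)
      - 2 * ((u ^ (1 - α) - (1 - u) ^ (1 - α)) * (1 - u) ^ (-α))) volume 0 (1 / 2) :=
    (intervalIntegrable_one_sub_rpow_neg_sub_one_mul_rpow_neg (by linarith) h2).sub
      (hK.const_mul 2)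
  have h0 : Tendsto H (𝓝[>] 0) (𝓝 ((0 - 1) / (1 - α))) := by
    have hc : Tendsto (fun u : ℝ => ((1 - u) ^ (1 - α)) ^ 2) (𝓝[>] 0) (𝓝 1) := by
      simpa using ((by fun_prop (disch := norm_num) : ContinuousAt
        (fun u : ℝ => ((1 - u) ^ (1 - α)) ^ 2) 0).tendsto).mono_left nhdsWithin_le_nhds
    exact ((tendsto_rpow_mul_one_sub_rpow_sub_one h1.le h2).sub hc).div_const _
  have h12 : Tendsto H (𝓝[<] (1 / 2)) (𝓝 (H (1 / 2))) :=
    (by fun_prop (disch := norm_num) : ContinuousAt H (1 / 2)).tendsto.mono_left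
      nhdsWithin_le_nhds
  have hFTC := integral_eq_sub_of_hasDerivAt_of_tendsto (by norm_num) hderiv hint h0 h12
  rw [integral_sub (intervalIntegrable_one_sub_rpow_neg_sub_one_mul_rpow_neg (by linarith) h2)
    (hK.const_mul 2), intervalIntegral.integral_const_mul] at hFTC
  rw [sub_eq_iff_eq_add'.1 hFTC]
  simp only [hH, show (1 : ℝ) - 1 / 2 = 1 / 2 by norm_num]
  field_simp
  ring

lemma integral_rpow_one_sub_sub_mul_one_sub_rpow_sub_three {α : ℝ} (h2 : α < 2) :
    ∫ u in (0 : ℝ)..(1 / 2), (u ^ (1 - α) - (1 - u) ^ (1 - α)) * (1 - u) ^ (α - 3) =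
      1 / (2 - α) - 1 := by
  have hα : 2 - α ≠ 0 := by linarith
  set P : ℝ → ℝ := fun u =>
    u ^ (2 - α) * (1 - u) ^ (α - 2) / (2 - α) - (1 - u) ^ (-1 : ℝ) with hP
  have hcont : ContinuousOn P (Icc 0 (1 / 2)) :=
    (((continuousOn_id.rpow_const fun _ _ => Or.inr (by linarith)).mul
      (continuousOn_one_sub_rpow _)).div_const _).sub (continuousOn_one_sub_rpow _)
  have hderiv : ∀ u ∈ Ioo (0 : ℝ) (1 / 2), HasDerivAt P
      ((u ^ (1 - α) - (1 - u) ^ (1 - α)) * (1 - u) ^ (α - 3)) u := by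
    rintro u ⟨hu0, hu⟩
    have hv : 0 < 1 - u := by linarith
    refine ((((Real.hasDerivAt_rpow_const (p := 2 - α) (Or.inl hu0.ne')).mul
      (hasDerivAt_one_sub_rpow (α - 2) (by linarith))).div_const (2 - α)).sub
      (hasDerivAt_one_sub_rpow (-1) (by linarith))).congr_deriv ?_
    have e1 : u ^ (2 - α) = u * u ^ (1 - α) := by
      rw [show 2 - α = (1 - α) + 1 by ring, Real.rpow_add_one hu0.ne']; ring
    have e2 : (1 - u) ^ (α - 2) = (1 - u) * (1 - u) ^ (α - 3) := by
      rw [show α - 2 = (α - 3) + 1 by ring, Real.rpow_add_one hv.ne']; ring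
    have e3 : (1 - u) ^ (-1 - 1 : ℝ) = (1 - u) ^ (1 - α) * (1 - u) ^ (α - 3) := by
      rw [← Real.rpow_add hv]; ring_nf
    rw [show 2 - α - 1 = 1 - α by ring, show α - 2 - 1 = α - 3 by ring, e1, e2, e3]
    field_simp
    ring
  rw [integral_eq_sub_of_hasDerivAt_of_le (by norm_num) hcont hderiv
    (intervalIntegrable_rpow_one_sub_sub_mul h2 (continuousOn_one_sub_rpow _))]
  have : (1 / 2 : ℝ) ^ (2 - α) * (1 / 2) ^ (α - 2) = 1 := by
    rw [← Real.rpow_add (by norm_num)]; norm_num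
  simp only [hP]
  norm_num [Real.zero_rpow hα, this]
  ring

lemma integral_rpow_one_sub_sub_mul_sub_pos {α a b : ℝ} (h1 : 1 < α) (h2 : α < 2)
    (hab : a < b) :
    0 < ∫ u in (0 : ℝ)..(1 / 2),
      (u ^ (1 - α) - (1 - u) ^ (1 - α)) * ((1 - u) ^ a - (1 - u) ^ b) := by
  refine intervalIntegral_pos_of_pos_on (intervalIntegrable_rpow_one_sub_sub_mul h2
    ((continuousOn_one_sub_rpow a).sub (continuousOn_one_sub_rpow b))) ?_ (by norm_num)
  rintro u ⟨hu0, hu⟩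
  exact mul_pos (sub_pos.2 (Real.rpow_lt_rpow_of_neg hu0 (by linarith) (by linarith)))
    (sub_pos.2 (Real.rpow_lt_rpow_of_exponent_gt (by linarith) (by linarith) hab))

lemma integral_rpow_one_sub_sub_mul_sub_neg {α a b : ℝ} (h1 : 1 < α) (h2 : α < 2)
    (hba : b < a) :
    ∫ u in (0 : ℝ)..(1 / 2),
      (u ^ (1 - α) - (1 - u) ^ (1 - α)) * ((1 - u) ^ a - (1 - u) ^ b) < 0 := by
  rw [← neg_pos, ← intervalIntegral.integral_neg]
  simpa only [← mul_neg, neg_sub] using integral_rpow_one_sub_sub_mul_sub_pos h1 h2 hba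

lemma integral_one_sub_rpow_neg_sub_one_mul_rpow_neg_sub_eq {α : ℝ} (h1 : 1 < α) (h2 : α < 2) :
    (∫ u in (0 : ℝ)..(1 / 2), ((1 - u) ^ (-α) - 1) * u ^ (-α)) - 2 ^ (α - 1) / (α - 1) =
      2 * (∫ u in (0 : ℝ)..(1 / 2),
        (u ^ (1 - α) - (1 - u) ^ (1 - α)) * ((1 - u) ^ (-α) - (1 - u) ^ (α - 3))) +
        α * (2 * α - 3) / ((α - 1) * (2 - α)) := by
  have hsplit : ∫ u in (0 : ℝ)..(1 / 2),
        (u ^ (1 - α) - (1 - u) ^ (1 - α)) * ((1 - u) ^ (-α) - (1 - u) ^ (α - 3)) =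
      (∫ u in (0 : ℝ)..(1 / 2), (u ^ (1 - α) - (1 - u) ^ (1 - α)) * (1 - u) ^ (-α)) -
        ∫ u in (0 : ℝ)..(1 / 2), (u ^ (1 - α) - (1 - u) ^ (1 - α)) * (1 - u) ^ (α - 3) := by
    simp_rw [mul_sub]
    exact integral_sub
      (intervalIntegrable_rpow_one_sub_sub_mul h2 (continuousOn_one_sub_rpow _))
      (intervalIntegrable_rpow_one_sub_sub_mul h2 (continuousOn_one_sub_rpow _))
  have hhalf : (1 / 2 : ℝ) ^ (1 - α) = 2 ^ (α - 1) := by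
    rw [one_div, Real.inv_rpow (by norm_num), ← Real.rpow_neg (by norm_num), neg_sub]
  have hα : α - 1 ≠ 0 := by linarith
  have hα' : 2 - α ≠ 0 := by linarith
  rw [hsplit, integral_one_sub_rpow_neg_sub_one_mul_rpow_neg h1 h2,
    integral_rpow_one_sub_sub_mul_one_sub_rpow_sub_three h2, hhalf]
  field_simp
  ring

/-- Lemma 5.3 of the paper.
For `α ∈ (1,2)` let `G(α) := ∫₀^{1/2} ((1−u)^{−α} − 1)·u^{−α} du − 2^{α−1}/(α−1)`.
Then `G(α) < 0` for `α ∈ (1, 3/2)`, `G(3/2) = 0`, and `G(α) > 0` for `α ∈ (3/2, 2)`. -/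
theorem stmt7 (G : ℝ → ℝ)
    (hG : ∀ α : ℝ, G α =
      (∫ u in (0:ℝ)..(1/2 : ℝ), ((1 - u) ^ (-α) - 1) * u ^ (-α)) - 2 ^ (α - 1) / (α - 1)) :
    (∀ α : ℝ, 1 < α → α < 3 / 2 → G α < 0) ∧
    G (3 / 2) = 0 ∧
    (∀ α : ℝ, 3 / 2 < α → α < 2 → 0 < G α) := by
  refine ⟨fun α h1 h2 => ?_, ?_, fun α h1 h2 => ?_⟩
  · rw [hG, integral_one_sub_rpow_neg_sub_one_mul_rpow_neg_sub_eq h1 (by linarith)]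
    have hint := integral_rpow_one_sub_sub_mul_sub_neg h1 (by linarith)
      (show α - 3 < -α by linarith)
    have hrat : α * (2 * α - 3) / ((α - 1) * (2 - α)) < 0 :=
      div_neg_of_neg_of_pos (mul_neg_of_pos_of_neg (by linarith) (by linarith))
        (mul_pos (by linarith) (by linarith))
    linarith
  · rw [hG, integral_one_sub_rpow_neg_sub_one_mul_rpow_neg_sub_eq (by norm_num) (by norm_num)]
    norm_num
  · rw [hG, integral_one_sub_rpow_neg_sub_one_mul_rpow_neg_sub_eq (by linarith) h2]
    have hint := integral_rpow_one_sub_sub_mul_sub_pos (by linarith) h2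
      (show -α < α - 3 by linarith)
    have hrat : 0 < α * (2 * α - 3) / ((α - 1) * (2 - α)) :=
      div_pos (mul_pos (by linarith) (by linarith)) (mul_pos (by linarith) (by linarith))
    linarith
end

section
/- Assume (A1) and (A3) hold with tail index α ∈ (1, 2), and let h be a function with h(t) → ∞, h(t) = o(t), and 0 < h(t) < t/2 for all large t. Then lim_{δ ↘ 0} limsup_{t → ∞} ∫_{h(t)/t}^{δ} (F̄(t(1−u))/F̄(t) − 1)·(F̄(tu)/F̄(t)) du = 0. -/
/-
Write `F = F̄` and `f` for its density. By the uniform convergence theorem for the regularly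
varying density (a Baire category argument), `f(s) ≍ f(t)` uniformly for `s ∈ [t/2, t]`, so
`t f(t) ≲ F(t/2) - F(t) ≲ F(t)` and then `F(t(1-u)) - F(t) ≲ u F(t)` for `u ≤ 1/2`. The integrand
is therefore `≲ u F(tu) / F(t)`. Fix `γ ∈ (α, 2)`; iterating `F(x/2) ≤ 2^γ F(x)` gives the Potter
bound `F(v) ≤ 2^γ (x/v)^γ F(x)` for `v ≤ x` beyond a threshold that `h(t)` eventually exceeds, so
`∫_{h(t)/t}^δ u F(tu) du ≲ δ² F(tδ)`. The limsup in `t` is thus `≲ δ^{2-α}`, which vanishes as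
`δ ↘ 0`.
-/

open MeasureTheory Filter Set

namespace RegularVariation

def RatioBounded (f : ℝ → ℝ) (r K T : ℝ) : Prop :=
  ∀ t, T ≤ t → f (r * t) ≤ K * f t ∧ f t ≤ K * f (r * t)

variable {f : ℝ → ℝ} {r r₁ r₂ K K' K₁ K₂ T T' T₁ T₂ : ℝ}

theorem RatioBounded.mono (h : RatioBounded f r K T) (hf0 : ∀ x, 0 ≤ f x) (hK : K ≤ K')
    (hT : T ≤ T') : RatioBounded f r K' T' := fun t ht =>
  have h' := h t (hT.trans ht)
  ⟨h'.1.trans (by gcongr; exact hf0 _), h'.2.trans (by gcongr; exact hf0 _)⟩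

theorem RatioBounded.mul (h₁ : RatioBounded f r₁ K₁ T₁) (h₂ : RatioBounded f r₂ K₂ T₂)
    (hr₁ : 0 < r₁) (hK₁ : 0 ≤ K₁) (hK₂ : 0 ≤ K₂) :
    RatioBounded f (r₁ * r₂) (K₁ * K₂) (max T₁ (T₂ / r₁)) := by
  intro t ht
  obtain ⟨h₁u, h₁l⟩ := h₁ t (le_of_max_le_left ht)
  obtain ⟨h₂u, h₂l⟩ := h₂ (r₁ * t) ((div_le_iff₀' hr₁).1 (le_of_max_le_right ht))
  rw [mul_comm r₁ r₂, mul_assoc]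
  constructor
  · calc f (r₂ * (r₁ * t)) ≤ K₂ * f (r₁ * t) := h₂u
      _ ≤ K₂ * (K₁ * f t) := by gcongr
      _ = K₁ * K₂ * f t := by ring
  · calc f t ≤ K₁ * f (r₁ * t) := h₁l
      _ ≤ K₁ * (K₂ * f (r₂ * (r₁ * t))) := by gcongr
      _ = K₁ * K₂ * f (r₂ * (r₁ * t)) := by ring

theorem RatioBounded.inv (h : RatioBounded f r K T) (hr : 0 < r) :
    RatioBounded f r⁻¹ K (r * T) := by
  intro t ht
  have hs := h (r⁻¹ * t) (by rwa [le_inv_mul_iff₀ hr])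
  rw [← mul_assoc, mul_inv_cancel₀ hr.ne', one_mul] at hs
  exact hs.symm

theorem ratioBounded_one : RatioBounded f 1 1 T := fun t _ => by simp

theorem exists_ratioBounded_of_tendsto (hf0 : ∀ x, 0 ≤ f x) {L : ℝ} (hL : 0 < L)
    (h : Tendsto (fun t => f (r * t) / f t) atTop (nhds L)) : ∃ K T, RatioBounded f r K T := by
  obtain ⟨T, hT⟩ := eventually_atTop.1 (h.eventually (Ioo_mem_nhds (half_lt_self hL)
    (lt_two_mul_self hL)))
  refine ⟨max (2 * L) (2 / L), T, fun t ht => ?_⟩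
  obtain ⟨hlo, hhi⟩ := hT t ht
  have hft : 0 < f t := (hf0 t).lt_of_ne fun h0 => by simp [← h0] at hlo; linarith
  rw [lt_div_iff₀ hft] at hlo
  rw [div_lt_iff₀ hft] at hhi
  constructor
  · nlinarith [le_max_left (2 * L) (2 / L)]
  · calc f t = 2 / L * (L / 2 * f t) := by field_simp
      _ ≤ 2 / L * f (r * t) := by gcongr
      _ ≤ max (2 * L) (2 / L) * f (r * t) := by gcongr; exacts [hf0 _, le_max_right _ _]

theorem isClosed_setOf_ratioBounded (hf : Continuous f) :
    IsClosed {r | RatioBounded f r K T} := by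
  simp only [RatioBounded, ofPred_forall]
  refine isClosed_iInter fun t => isClosed_iInter fun _ => ?_
  have hc : Continuous fun r : ℝ => f (r * t) := hf.comp (continuous_mul_const t)
  exact (isClosed_le hc continuous_const).inter (isClosed_le continuous_const
    (continuous_const.mul hc))

/-- The closed sets `{r ∈ [1/2, 1] | RatioBounded f r n n}` cover `(1/2, 1)`, so by Baire one of
them contains an interval. -/
theorem exists_Icc_ratioBounded (hf : Continuous f) (hf0 : ∀ x, 0 ≤ f x)
    (h : ∀ r, 0 < r → ∃ K T, RatioBounded f r K T) :
    ∃ c d : ℝ, 1 / 2 ≤ c ∧ c < d ∧ d ≤ 1 ∧ ∃ n : ℕ, ∀ r ∈ Icc c d, RatioBounded f r n n := by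
  set S : ℕ → Set ℝ := fun n => Icc (1 / 2) 1 ∩ {r | RatioBounded f r n n}
  have hS : ∀ n, IsClosed (S n) := fun n => isClosed_Icc.inter (isClosed_setOf_ratioBounded hf)
  have hcover : Ioo (1 / 2 : ℝ) 1 ⊆ ⋃ n, S n := by
    intro r hr
    obtain ⟨K, T, hKT⟩ := h r (by linarith [hr.1])
    obtain ⟨n, hn⟩ := exists_nat_ge (max K T)
    exact mem_iUnion.2 ⟨n, Ioo_subset_Icc_self hr,
      hKT.mono hf0 ((le_max_left _ _).trans hn) ((le_max_right _ _).trans hn)⟩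
  obtain ⟨n, x, hx⟩ : ∃ n, (interior (S n)).Nonempty := by
    by_contra! h0
    refine not_isMeagre_of_isOpen isOpen_Ioo (nonempty_Ioo.2 (by norm_num : (1 / 2 : ℝ) < 1)) ?_
    exact (isMeagre_iUnion fun n => ((hS n).isNowhereDense_iff.2 (h0 n)).isMeagre).mono hcover
  obtain ⟨ε, hε, hball⟩ := Metric.mem_nhds_iff.1 (mem_interior_iff_mem_nhds.1 hx)
  have hsub : Icc (x - ε / 2) (x + ε / 2) ⊆ S n := by
    rw [← Real.closedBall_eq_Icc]
    exact (Metric.closedBall_subset_ball (half_lt_self hε)).trans hball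
  refine ⟨x - ε / 2, x + ε / 2, (hsub (left_mem_Icc.2 (by linarith))).1.1, by linarith,
    (hsub (right_mem_Icc.2 (by linarith))).1.2, n, fun r hr => (hsub hr).2⟩

theorem exists_ratioBounded_Icc_one (hf : Continuous f) (hf0 : ∀ x, 0 ≤ f x)
    (h : ∀ r, 0 < r → ∃ K T, RatioBounded f r K T) :
    ∃ ρ, 0 < ρ ∧ ρ < 1 ∧ ∃ K T, 0 ≤ K ∧ 0 ≤ T ∧ ∀ r ∈ Icc ρ 1, RatioBounded f r K T := by
  obtain ⟨c, d, hc, hcd, hd, n, hn⟩ := exists_Icc_ratioBounded hf hf0 h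
  have hd0 : 0 < d := by linarith
  refine ⟨c / d, by positivity, (div_lt_one hd0).2 hcd, n * n, n, by positivity, by positivity,
    fun r hr => ?_⟩
  have hrd : r * d ∈ Icc c d :=
    ⟨(div_le_iff₀ hd0).1 hr.1, mul_le_of_le_one_left hd0.le hr.2⟩
  have hprod := ((hn d ⟨hcd.le, le_rfl⟩).inv hd0).mul (hn _ hrd) (inv_pos.2 hd0)
    (Nat.cast_nonneg n) (Nat.cast_nonneg n)
  rw [mul_comm r d, inv_mul_cancel_left₀ hd0.ne', div_inv_eq_mul, mul_comm (n : ℝ) d,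
    max_self] at hprod
  exact hprod.mono hf0 le_rfl (mul_le_of_le_one_left (Nat.cast_nonneg n) hd)

theorem ratioBounded_of_mem_Icc_pow {ρ : ℝ} (hf0 : ∀ x, 0 ≤ f x) (hρ : 0 < ρ) (hρ1 : ρ ≤ 1)
    (hK : 0 ≤ K) (hT : 0 ≤ T) (h : ∀ r ∈ Icc ρ 1, RatioBounded f r K T) :
    ∀ m : ℕ, ∀ r ∈ Icc (ρ ^ m) 1, RatioBounded f r (K ^ m) (T / ρ ^ m) := by
  intro m
  induction m with
  | zero =>
    intro r hr
    obtain rfl : r = 1 := by simpa using hr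
    simpa using ratioBounded_one
  | succ m ih =>
    intro r hr
    have hρm : 0 < ρ ^ m := pow_pos hρ m
    set r₁ := max ρ r
    have hr₁ : r₁ ∈ Icc ρ 1 := ⟨le_max_left _ _, max_le hρ1 hr.2⟩
    have hr₁0 : 0 < r₁ := hρ.trans_le hr₁.1
    have hr₂ : r / r₁ ∈ Icc (ρ ^ m) 1 := by
      refine ⟨(le_div_iff₀ hr₁0).2 ?_, div_le_one_of_le₀ (le_max_right _ _) hr₁0.le⟩
      rw [mul_max_of_nonneg _ _ hρm.le, ← pow_succ]
      exact max_le hr.1 (mul_le_of_le_one_left ((pow_pos hρ _).le.trans hr.1)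
        (pow_le_one₀ hρ.le hρ1))
    have hprod := (h r₁ hr₁).mul (ih _ hr₂) hr₁0 hK (pow_nonneg hK m)
    rw [mul_div_cancel₀ _ hr₁0.ne', ← pow_succ'] at hprod
    refine hprod.mono hf0 le_rfl (max_le ?_ ?_)
    · exact le_div_self hT (by positivity) (pow_le_one₀ hρ.le hρ1)
    · rw [div_div, pow_succ]
      exact div_le_div_of_nonneg_left hT (by positivity) (by gcongr; exact hr₁.1)

theorem exists_ratioBounded_Icc (hf : Continuous f) (hf0 : ∀ x, 0 ≤ f x)
    (h : ∀ r, 0 < r → ∃ K T, RatioBounded f r K T) {ε : ℝ} (hε : 0 < ε) :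
    ∃ K T, 0 < K ∧ ∀ r ∈ Icc ε 1, RatioBounded f r K T := by
  obtain ⟨ρ, hρ, hρ1, K, T, hK, hT, hρK⟩ := exists_ratioBounded_Icc_one hf hf0 h
  obtain ⟨m, hm⟩ := exists_pow_lt_of_lt_one hε hρ1
  refine ⟨max (K ^ m) 1, T / ρ ^ m, by positivity, fun r hr => ?_⟩
  exact (ratioBounded_of_mem_Icc_pow hf0 hρ hρ1.le hK hT hρK m r ⟨hm.le.trans hr.1, hr.2⟩).mono
    hf0 (le_max_left _ _) le_rfl

end RegularVariation

namespace TailFunction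

open intervalIntegral

variable {f F : ℝ → ℝ} {c K M T t x y : ℝ}

theorem antitone_of_sub_eq_integral (hf0 : ∀ x, 0 ≤ f x)
    (hF : ∀ x y, F x - F y = ∫ s in x..y, f s) : Antitone F := fun x y hxy => by
  have : 0 ≤ ∫ s in x..y, f s := integral_nonneg hxy fun s _ => hf0 s
  linarith [hF x y]

theorem continuous_of_sub_eq_integral (hf : Continuous f)
    (hF : ∀ x y, F x - F y = ∫ s in x..y, f s) : Continuous F := by
  have hF0 : F = fun x => F 0 - ∫ s in (0 : ℝ)..x, f s := funext fun x => by linarith [hF 0 x]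
  rw [hF0]
  exact continuous_const.sub (continuous_primitive (fun a b => hf.intervalIntegrable a b) 0)

theorem sub_le_mul_of_forall_le (hf : Continuous f) (hF : ∀ x y, F x - F y = ∫ s in x..y, f s)
    (hxy : x ≤ y) (h : ∀ s ∈ Icc x y, f s ≤ M) : F x - F y ≤ M * (y - x) := by
  rw [hF]
  calc ∫ s in x..y, f s ≤ ∫ _ in x..y, M :=
        integral_mono_on hxy (hf.intervalIntegrable x y) intervalIntegrable_const h
    _ = M * (y - x) := by simp [mul_comm]

theorem mul_le_sub_of_forall_le (hf : Continuous f) (hF : ∀ x y, F x - F y = ∫ s in x..y, f s)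
    (hxy : x ≤ y) (h : ∀ s ∈ Icc x y, M ≤ f s) : M * (y - x) ≤ F x - F y := by
  rw [hF]
  calc M * (y - x) = ∫ _ in x..y, M := by simp [mul_comm]
    _ ≤ ∫ s in x..y, f s :=
        integral_mono_on hxy intervalIntegrable_const (hf.intervalIntegrable x y) h

theorem mul_density_le_of_half_le (hf : Continuous f) (hF : ∀ x y, F x - F y = ∫ s in x..y, f s)
    (hK : 0 < K) (ht : 0 ≤ t) (hlow : ∀ s ∈ Icc (t / 2) t, f t ≤ K * f s)
    (hhalf : F (t / 2) ≤ c * F t) : t * f t ≤ 2 * K * (c - 1) * F t := by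
  calc t * f t = 2 * K * (f t / K * (t - t / 2)) := by field_simp; ring
    _ ≤ 2 * K * (F (t / 2) - F t) := by
        gcongr
        exact mul_le_sub_of_forall_le hf hF (half_le_self ht) fun s hs =>
          (div_le_iff₀' hK).2 (hlow s hs)
    _ ≤ 2 * K * (c * F t - F t) := by gcongr
    _ = 2 * K * (c - 1) * F t := by ring

theorem sub_le_mul_of_half_le (hf : Continuous f) (hF : ∀ x y, F x - F y = ∫ s in x..y, f s)
    (hK : 0 < K) (ht : 0 ≤ t) (hb : ∀ s ∈ Icc (t / 2) t, f s ≤ K * f t ∧ f t ≤ K * f s)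
    (hhalf : F (t / 2) ≤ c * F t) {u : ℝ} (hu : u ∈ Icc (0 : ℝ) (1 / 2)) :
    F (t * (1 - u)) - F t ≤ 2 * K ^ 2 * (c - 1) * u * F t := by
  have hmul := mul_density_le_of_half_le hf hF hK ht (fun s hs => (hb s hs).2) hhalf
  calc F (t * (1 - u)) - F t ≤ K * f t * (t - t * (1 - u)) :=
        sub_le_mul_of_forall_le hf hF (by nlinarith [hu.1]) fun s hs =>
          (hb s ⟨by nlinarith [hs.1, hu.2], hs.2⟩).1
    _ = K * u * (t * f t) := by ring
    _ ≤ K * u * (2 * K * (c - 1) * F t) := by gcongr; exact mul_nonneg hK.le hu.1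
    _ = 2 * K ^ 2 * (c - 1) * u * F t := by ring

theorem eventually_sub_le_mul (hf : Continuous f) (hF : ∀ x y, F x - F y = ∫ s in x..y, f s)
    (hK : 0 < K) (hRB : ∀ r ∈ Icc (1 / 2 : ℝ) 1, RegularVariation.RatioBounded f r K T)
    (hhalf : ∀ᶠ t in atTop, F (t / 2) ≤ c * F t) :
    ∀ᶠ t in atTop, ∀ u ∈ Icc (0 : ℝ) (1 / 2),
      F (t * (1 - u)) - F t ≤ 2 * K ^ 2 * (c - 1) * u * F t := by
  filter_upwards [hhalf, eventually_ge_atTop T, eventually_gt_atTop 0] with t hct hTt ht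
  refine fun u hu => sub_le_mul_of_half_le hf hF hK ht.le (fun s hs => ?_) hct hu
  have hst : s / t ∈ Icc (1 / 2 : ℝ) 1 :=
    ⟨(le_div_iff₀ ht).2 (by linarith [hs.1]), div_le_one_of_le₀ hs.2 ht.le⟩
  simpa [div_mul_cancel₀ s ht.ne'] using hRB _ hst t hTt

theorem le_pow_mul_of_half_le (hT : 0 ≤ T) (hc : 0 ≤ c)
    (h : ∀ x, T ≤ x → F (x / 2) ≤ c * F x) :
    ∀ n : ℕ, ∀ x, T ≤ x / 2 ^ n → F (x / 2 ^ (n + 1)) ≤ c ^ (n + 1) * F x := by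
  intro n
  induction n with
  | zero => simpa using h
  | succ n ih =>
    intro x hx
    have hx0 : 0 ≤ x := by
      have := hT.trans hx
      rwa [le_div_iff₀ (by positivity), zero_mul] at this
    calc F (x / 2 ^ (n + 2)) = F (x / 2 ^ (n + 1) / 2) := by rw [div_div, ← pow_succ]
      _ ≤ c * F (x / 2 ^ (n + 1)) := h _ hx
      _ ≤ c * (c ^ (n + 1) * F x) := by
          gcongr
          exact ih x (hx.trans (div_le_div_of_nonneg_left hx0 (by positivity)
            (pow_le_pow_right₀ one_le_two n.le_succ)))
      _ = c ^ (n + 2) * F x := by ring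

theorem le_rpow_mul_of_half_le {γ v : ℝ} (hF : Antitone F) (hF0 : ∀ x, 0 ≤ F x) (hT : 0 < T)
    (hγ : 0 ≤ γ) (h : ∀ x, T ≤ x → F (x / 2) ≤ 2 ^ γ * F x) (hv : T ≤ v) (hvx : v ≤ x) :
    F v ≤ 2 ^ γ * (x / v) ^ γ * F x := by
  have hv0 : 0 < v := hT.trans_le hv
  obtain ⟨n, hn, hn'⟩ := exists_nat_pow_near ((one_le_div hv0).2 hvx) one_lt_two
  have hxn : x / 2 ^ (n + 1) ≤ v := by
    rw [div_lt_iff₀ hv0] at hn'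
    exact (div_le_iff₀ (by positivity)).2 (by linarith)
  have hvn : v ≤ x / 2 ^ n := by
    rw [le_div_iff₀ hv0] at hn
    exact (le_div_iff₀ (by positivity)).2 (by linarith)
  calc F v ≤ F (x / 2 ^ (n + 1)) := hF hxn
    _ ≤ (2 ^ γ) ^ (n + 1) * F x := le_pow_mul_of_half_le hT.le (by positivity) h n x (hv.trans hvn)
    _ = 2 ^ γ * ((2 : ℝ) ^ n) ^ γ * F x := by
        rw [pow_succ', ← Real.rpow_natCast, ← Real.rpow_natCast, ← Real.rpow_mul zero_le_two,
          ← Real.rpow_mul zero_le_two, mul_comm γ]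
    _ ≤ 2 ^ γ * (x / v) ^ γ * F x := by gcongr; exact hF0 x

theorem integral_mul_le {γ δ a : ℝ} (hFc : Continuous F) (hF : Antitone F)
    (hF0 : ∀ x, 0 ≤ F x) (hT : 0 < T) (hγ0 : 0 ≤ γ) (hγ2 : γ < 2)
    (h : ∀ x, T ≤ x → F (x / 2) ≤ 2 ^ γ * F x) (ht : 0 < t) (ha : T ≤ t * a) (haδ : a ≤ δ) :
    ∫ u in a..δ, u * F (t * u) ≤ 2 ^ γ / (2 - γ) * δ ^ 2 * F (t * δ) := by
  have ha0 : 0 < a := pos_of_mul_pos_right (hT.trans_le ha) ht.le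
  have hδ0 : 0 < δ := ha0.trans_le haδ
  set C := 2 ^ γ * δ ^ γ * F (t * δ) with hC
  have hpt : ∀ u ∈ Icc a δ, u * F (t * u) ≤ C * u ^ (1 - γ) := by
    intro u hu
    have hu0 : 0 < u := ha0.trans_le hu.1
    have hP := le_rpow_mul_of_half_le hF hF0 hT hγ0 h (ha.trans (by gcongr; exact hu.1))
      (show t * u ≤ t * δ by gcongr; exact hu.2)
    rw [mul_div_mul_left _ _ ht.ne', Real.div_rpow (hu0.le.trans hu.2) hu0.le] at hP
    calc u * F (t * u) ≤ u * (2 ^ γ * (δ ^ γ / u ^ γ) * F (t * δ)) := by gcongr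
      _ = C * u ^ (1 - γ) := by
        rw [hC, Real.rpow_sub hu0, Real.rpow_one]
        field_simp
  have hint : ∫ u in a..δ, u ^ (1 - γ) ≤ δ ^ (2 - γ) / (2 - γ) := by
    rw [integral_rpow (Or.inl (by linarith)), show 1 - γ + 1 = 2 - γ by ring]
    exact div_le_div_of_nonneg_right (sub_le_self _ (by positivity)) (by linarith)
  calc ∫ u in a..δ, u * F (t * u) ≤ ∫ u in a..δ, C * u ^ (1 - γ) :=
        integral_mono_on haδ (Continuous.intervalIntegrable (by fun_prop) _ _)
          ((intervalIntegrable_rpow' (by linarith)).const_mul C) hpt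
    _ ≤ C * (δ ^ (2 - γ) / (2 - γ)) := by
        rw [intervalIntegral.integral_const_mul]
        exact mul_le_mul_of_nonneg_left hint (by have := hF0 (t * δ); positivity)
    _ = 2 ^ γ / (2 - γ) * δ ^ 2 * F (t * δ) := by
        have hδ2 : δ ^ γ * δ ^ (2 - γ) = δ ^ 2 := by
          rw [← Real.rpow_add hδ0, add_sub_cancel, Real.rpow_two]
        rw [← hδ2]
        ring

theorem eventually_half_le {α γ : ℝ} (hFpos : ∀ x, 0 < F x)
    (h : Tendsto (fun t => F (1 / 2 * t) / F t) atTop (nhds ((1 / 2) ^ (-α)))) (hαγ : α < γ) :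
    ∀ᶠ t in atTop, F (t / 2) ≤ 2 ^ γ * F t := by
  rw [one_div, Real.inv_rpow zero_le_two, Real.rpow_neg zero_le_two, inv_inv] at h
  filter_upwards [h.eventually_lt_const (Real.rpow_lt_rpow_of_exponent_lt one_lt_two hαγ)]
    with t ht
  rw [inv_mul_eq_div, div_lt_iff₀ (hFpos t)] at ht
  exact ht.le

theorem integrand_mem_Icc {C u : ℝ} (hF : Antitone F) (hFt : 0 < F t) (hFtu : 0 ≤ F (t * u))
    (ht : 0 ≤ t) (hu : 0 ≤ u) (hLip : F (t * (1 - u)) - F t ≤ C * u * F t) :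
    (F (t * (1 - u)) / F t - 1) * (F (t * u) / F t) ∈ Icc 0 (C / F t * (u * F (t * u))) := by
  have hlo : 0 ≤ F (t * (1 - u)) / F t - 1 := by
    rw [sub_nonneg, one_le_div hFt]
    exact hF (by nlinarith)
  have hhi : F (t * (1 - u)) / F t - 1 ≤ C * u := by
    rw [sub_le_iff_le_add, div_le_iff₀ hFt]
    linarith
  have hr : 0 ≤ F (t * u) / F t := div_nonneg hFtu hFt.le
  refine ⟨mul_nonneg hlo hr, ?_⟩
  calc (F (t * (1 - u)) / F t - 1) * (F (t * u) / F t) ≤ C * u * (F (t * u) / F t) := by gcongr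
    _ = C / F t * (u * F (t * u)) := by ring

theorem eventually_integral_le {h : ℝ → ℝ} {C γ δ : ℝ} (hFc : Continuous F) (hF : Antitone F)
    (hFpos : ∀ x, 0 < F x) (hγ0 : 0 ≤ γ) (hγ2 : γ < 2) (hC : 0 ≤ C)
    (hhalf : ∀ᶠ t in atTop, F (t / 2) ≤ 2 ^ γ * F t)
    (hLip : ∀ᶠ t in atTop, ∀ u ∈ Icc (0 : ℝ) (1 / 2), F (t * (1 - u)) - F t ≤ C * u * F t)
    (hhtop : Tendsto h atTop atTop) (hho : h =o[atTop] fun t => t) (hδ : δ ∈ Ioc (0 : ℝ) (1 / 2)) :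
    ∀ᶠ t in atTop,
      0 ≤ ∫ u in (h t / t)..δ, (F (t * (1 - u)) / F t - 1) * (F (t * u) / F t) ∧
      ∫ u in (h t / t)..δ, (F (t * (1 - u)) / F t - 1) * (F (t * u) / F t) ≤
        C * (2 ^ γ / (2 - γ)) * δ ^ 2 * (F (δ * t) / F t) := by
  obtain ⟨T₀, hT₀⟩ := eventually_atTop.1 hhalf
  have hT : ∀ x, max T₀ 1 ≤ x → F (x / 2) ≤ 2 ^ γ * F x := fun x hx =>
    hT₀ x ((le_max_left _ _).trans hx)
  filter_upwards [hLip, eventually_gt_atTop 0, hhtop.eventually_ge_atTop (max T₀ 1),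
    hho.tendsto_div_nhds_zero.eventually (gt_mem_nhds hδ.1)] with t hLt ht hTh hat
  have hTa : max T₀ 1 ≤ t * (h t / t) := by rwa [mul_div_cancel₀ _ ht.ne']
  have ha0 : 0 < h t / t := div_pos ((zero_lt_one.trans_le (le_max_right _ _)).trans_le hTh) ht
  have hpt : ∀ u ∈ Icc (h t / t) δ,
      (F (t * (1 - u)) / F t - 1) * (F (t * u) / F t) ∈ Icc 0 (C / F t * (u * F (t * u))) :=
    fun u hu => integrand_mem_Icc hF (hFpos t) (hFpos _).le ht.le (ha0.le.trans hu.1)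
      (hLt u ⟨ha0.le.trans hu.1, hu.2.trans hδ.2⟩)
  refine ⟨integral_nonneg hat.le fun u hu => (hpt u hu).1, ?_⟩
  calc ∫ u in (h t / t)..δ, (F (t * (1 - u)) / F t - 1) * (F (t * u) / F t)
      ≤ ∫ u in (h t / t)..δ, C / F t * (u * F (t * u)) :=
        integral_mono_on hat.le (Continuous.intervalIntegrable (by fun_prop) _ _)
          (Continuous.intervalIntegrable (by fun_prop) _ _) fun u hu => (hpt u hu).2
    _ = C / F t * ∫ u in (h t / t)..δ, u * F (t * u) := intervalIntegral.integral_const_mul _ _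
    _ ≤ C / F t * (2 ^ γ / (2 - γ) * δ ^ 2 * F (t * δ)) :=
        mul_le_mul_of_nonneg_left (integral_mul_le hFc hF (fun x => (hFpos x).le)
          (zero_lt_one.trans_le (le_max_right _ _)) hγ0 hγ2 hT ht hTa hat.le)
          (div_nonneg hC (hFpos t).le)
    _ = C * (2 ^ γ / (2 - γ)) * δ ^ 2 * (F (δ * t) / F t) := by rw [mul_comm t δ]; ring

end TailFunction

theorem limsup_mem_Icc_of_tendsto {ι : Type*} {l : Filter ι} [l.NeBot] {g k : ι → ℝ} {L : ℝ}
    (h : ∀ᶠ t in l, 0 ≤ g t ∧ g t ≤ k t) (hk : Tendsto k l (nhds L)) :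
    limsup g l ∈ Icc 0 L := by
  have hbdd : IsBoundedUnder (· ≤ ·) l g :=
    hk.isBoundedUnder_le.mono_le (h.mono fun _ ht => ht.2)
  refine ⟨le_limsup_of_frequently_le (h.mono fun _ ht => ht.1).frequently hbdd, ?_⟩
  rw [← hk.limsup_eq]
  exact limsup_le_limsup (h.mono fun _ ht => ht.2)
    (isCoboundedUnder_le_of_eventually_le l (h.mono fun _ ht => ht.1)) hk.isBoundedUnder_le

theorem tendsto_limsup_nhdsGT_zero {F : ℝ → ℝ} {G : ℝ → ℝ → ℝ} {α C : ℝ} (hα : α < 2)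
    (hF : ∀ u, 0 < u → Tendsto (fun t => F (u * t) / F t) atTop (nhds (u ^ (-α))))
    (hG : ∀ δ ∈ Ioc (0 : ℝ) (1 / 2),
      ∀ᶠ t in atTop, 0 ≤ G δ t ∧ G δ t ≤ C * δ ^ 2 * (F (δ * t) / F t)) :
    Tendsto (fun δ => limsup (G δ) atTop) (nhdsWithin 0 (Ioi 0)) (nhds 0) := by
  have hbound : ∀ δ ∈ Ioc (0 : ℝ) (1 / 2), limsup (G δ) atTop ∈ Icc 0 (C * δ ^ (2 - α)) := by
    intro δ hδ
    rw [Real.rpow_sub hδ.1, Real.rpow_two, div_eq_mul_inv, ← Real.rpow_neg hδ.1.le, ← mul_assoc]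
    exact limsup_mem_Icc_of_tendsto (hG δ hδ) ((hF δ hδ.1).const_mul _)
  have hpow : Tendsto (fun δ : ℝ => C * δ ^ (2 - α)) (nhds 0) (nhds 0) := by
    have := (Real.continuousAt_rpow_const 0 (2 - α) (Or.inr (by linarith))).tendsto.const_mul C
    rwa [Real.zero_rpow (by linarith), mul_zero] at this
  have hmem : Ioc (0 : ℝ) (1 / 2) ∈ nhdsWithin 0 (Ioi 0) := Ioc_mem_nhdsGT (by norm_num)
  exact tendsto_of_tendsto_of_tendsto_of_le_of_le' tendsto_const_nhds
    (hpow.mono_left nhdsWithin_le_nhds)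
    (eventually_of_mem hmem fun δ hδ => (hbound δ hδ).1)
    (eventually_of_mem hmem fun δ hδ => (hbound δ hδ).2)

theorem tail_sub_tail_eq_integral {Ω : Type*} [MeasurableSpace Ω] {P : Measure Ω}
    [IsFiniteMeasure P] {X : Ω → ℝ} (hX : Measurable X) {f : ℝ → ℝ} (hf : Continuous f)
    (hf0 : ∀ x, 0 ≤ f x) (hmap : P.map X = volume.withDensity fun x => ENNReal.ofReal (f x))
    (x y : ℝ) : (P {ω | X ω > x}).toReal - (P {ω | X ω > y}).toReal = ∫ s in x..y, f s := by
  have key : ∀ x y, x ≤ y →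
      (P {ω | X ω > x}).toReal - (P {ω | X ω > y}).toReal = ∫ s in x..y, f s := by
    intro x y hxy
    have htail : ∀ z, (P {ω | X ω > z}).toReal = (P.map X).real (Ioi z) := fun z =>
      (map_measureReal_apply hX measurableSet_Ioi).symm
    rw [htail, htail, ← measureReal_sdiff (Ioi_subset_Ioi hxy) measurableSet_Ioi, Ioi_sdiff_Ioi,
      hmap, measureReal_def, withDensity_apply _ measurableSet_Ioc,
      intervalIntegral.integral_of_le hxy, integral_eq_lintegral_of_nonneg_ae
        (ae_of_all _ hf0) hf.aestronglyMeasurable]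
  rcases le_total x y with hxy | hyx
  · exact key x y hxy
  · rw [intervalIntegral.integral_symm, ← key y x hyx, neg_sub]

open RegularVariation TailFunction in
theorem stmt8_general
    {Ω : Type*} [MeasurableSpace Ω] (P : Measure Ω) [IsProbabilityMeasure P]
    (X : Ω → ℝ) (hXm : Measurable X)
    (hXsupp : ∀ t : ℝ, 0 < P {ω | X ω > t})
    (Fbar : ℝ → ℝ) (hFbar : ∀ t, Fbar t = (P {ω | X ω > t}).toReal)
    (α : ℝ) (hα1 : 1 < α) (hα2 : α < 2)
    (hA1 : ∀ u : ℝ, 0 < u →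
      Tendsto (fun t => Fbar (u * t) / Fbar t) atTop (nhds (u ^ (-α))))
    (hA3 : ∃ f : ℝ → ℝ, Continuous f ∧ (∀ x, 0 ≤ f x) ∧
      P.map X = volume.withDensity (fun x => ENNReal.ofReal (f x)) ∧
      ∀ u : ℝ, 0 < u →
        Tendsto (fun t => f (u * t) / f t) atTop (nhds (u ^ (-(α + 1)))))
    (h : ℝ → ℝ)
    (hhtop : Tendsto h atTop atTop) (hho : h =o[atTop] (fun t => t)) :
    Tendsto (fun δ : ℝ => Filter.limsup (fun t : ℝ =>
        ∫ u in (h t / t)..δ,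
          (Fbar (t * (1 - u)) / Fbar t - 1) * (Fbar (t * u) / Fbar t)) atTop)
      (nhdsWithin 0 (Set.Ioi 0)) (nhds 0) := by
  obtain ⟨f, hfc, hf0, hmap, hfRV⟩ := hA3
  have hF : ∀ x y, Fbar x - Fbar y = ∫ s in x..y, f s := fun x y => by
    rw [hFbar, hFbar]
    exact tail_sub_tail_eq_integral hXm hfc hf0 hmap x y
  have hFpos : ∀ t, 0 < Fbar t := fun t => by
    rw [hFbar]
    exact ENNReal.toReal_pos (hXsupp t).ne' (measure_ne_top P _)
  obtain ⟨γ, hγ0, hαγ, hγ2⟩ : ∃ γ : ℝ, 0 ≤ γ ∧ α < γ ∧ γ < 2 :=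
    ⟨(α + 2) / 2, by linarith, by linarith, by linarith⟩
  have hhalf := eventually_half_le hFpos (hA1 (1 / 2) one_half_pos) hαγ
  obtain ⟨K, T, hK, hRB⟩ := exists_ratioBounded_Icc hfc hf0
    (fun r hr => exists_ratioBounded_of_tendsto hf0 (Real.rpow_pos_of_pos hr _) (hfRV r hr))
    one_half_pos
  have hC : 0 ≤ 2 * K ^ 2 * (2 ^ γ - 1) :=
    mul_nonneg (by positivity) (sub_nonneg.2 (Real.one_le_rpow one_le_two hγ0))
  exact tendsto_limsup_nhdsGT_zero hα2 hA1 fun δ hδ =>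
    eventually_integral_le (continuous_of_sub_eq_integral hfc hF)
      (antitone_of_sub_eq_integral hf0 hF) hFpos hγ0 hγ2 hC hhalf
      (eventually_sub_le_mul hfc hF hK hRB hhalf) hhtop hho hδ

/-- Under (A1) and (A3) with `α ∈ (1,2)`, and `h(t) → ∞`,
`h(t) = o(t)`, `0 < h(t) < t/2` for large `t`, the double limit
`lim_{δ ↘ 0} limsup_{t → ∞} ∫_{h(t)/t}^δ (F̄(t(1−u))/F̄(t) − 1)·(F̄(tu)/F̄(t)) du = 0`
holds. -/
theorem stmt8
    {Ω : Type*} [MeasurableSpace Ω] (P : Measure Ω) [IsProbabilityMeasure P]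
    (X : Ω → ℝ) (hXm : Measurable X)
    (hXint : Integrable X P) (hXmean : ∫ ω, X ω ∂P < 0)
    (hXsupp : ∀ t : ℝ, 0 < P {ω | X ω > t})
    (Fbar : ℝ → ℝ) (hFbar : ∀ t, Fbar t = (P {ω | X ω > t}).toReal)
    (α : ℝ) (hα1 : 1 < α) (hα2 : α < 2)
    (hA1 : ∀ u : ℝ, 0 < u →
      Tendsto (fun t => Fbar (u * t) / Fbar t) atTop (nhds (u ^ (-α))))
    (hA3 : ∃ f : ℝ → ℝ, Continuous f ∧ (∀ x, 0 ≤ f x) ∧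
      P.map X = volume.withDensity (fun x => ENNReal.ofReal (f x)) ∧
      ∀ u : ℝ, 0 < u →
        Tendsto (fun t => f (u * t) / f t) atTop (nhds (u ^ (-(α + 1)))))
    (h : ℝ → ℝ)
    (hhtop : Tendsto h atTop atTop) (hho : h =o[atTop] (fun t => t))
    (hhb : ∀ᶠ t in atTop, 0 < h t ∧ h t < t / 2) :
    Tendsto (fun δ : ℝ => Filter.limsup (fun t : ℝ =>
        ∫ u in (h t / t)..δ,
          (Fbar (t * (1 - u)) / Fbar t - 1) * (Fbar (t * u) / Fbar t)) atTop)
      (nhdsWithin 0 (Set.Ioi 0)) (nhds 0) :=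
  stmt8_general P X hXm hXsupp Fbar hFbar α hα1 hα2 hA1 hA3 h hhtop hho
end

section
/- Suppose there exists T such that P(X + Z > t) ≤ P(Z > t) for all t ≥ T. Then there exists c ∈ ℝ (sufficiently large) such that for every b ≥ 0, the path measure ℚ^{b,c} induced by the Blanchet–Glynn transition kernel is a direct proposal for exact conditional sampling from ℙ(· | τ_b < ∞). -/
/-!
Under `ℚ^{b,c}` the first `n + 1` positions have density
`∏_{k<n} v(S_{k+1} - b - c) / w(S_k - b - c)` with respect to `ℙ`. On `{τ_b = n}` every `S_k` with
`k < n` lies below `b`, where the tail hypothesis gives `w ≤ v` at the shifted points as soon as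
`c ≥ T`; since `v` is increasing and `S_n > b ≥ S_0`, the product is then at least `1`, so `ℚ^{b,c}`
dominates `ℙ` on `F_{τ_b} ∩ {τ_b < ∞}`. Strictness comes from a single jump from `S_0 = 0` far above
`b`: there the one-step density `v(z - b - c) / w(-b - c)` exceeds `1`, because
`w(-b - c) = P(X + Z > b + c) < 1` for large `c` while `v(m) → 1`.
-/

open MeasureTheory ProbabilityTheory Filter Set
open scoped ENNReal

/-- The one-step transition law of the random walk: from state `y`, move to `y + X`
where `X` has law `μX`. -/
noncomputable def stepLaw (μX : Measure ℝ) (y : ℝ) : Measure ℝ :=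
  μX.map (fun x => y + x)

/-- The Blanchet–Glynn transition kernel
`Q^{b,c}(y, dz) = P(y, dz) · v(z−b−c)/w(y−b−c)`, where `P(y,·)` is the law of `y + X`. -/
noncomputable def BGkernel (μX : Measure ℝ) (v w : ℝ → ℝ) (b c : ℝ) (y : ℝ) : Measure ℝ :=
  (stepLaw μX y).withDensity fun z => ENNReal.ofReal (v (z - b - c) / w (y - b - c))

/-- The law of the first `n+1` steps of a Markov chain with transition law `κ`
started at `x0`. -/
noncomputable def finLaw (κ : ℝ → Measure ℝ) (x0 : ℝ) : (n : ℕ) → Measure (Fin (n + 1) → ℝ)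
  | 0 => Measure.dirac fun _ => x0
  | n + 1 => (finLaw κ x0 n).bind fun v =>
      (κ (v (Fin.last n))).map fun z => Fin.snoc v z

/-- `Q` is the path law on `ℝ^ℕ` of the Markov chain started at `x0` with transition
law `κ`: all its finite-dimensional distributions equal the iterated kernel laws. -/
def IsMarkovLaw (κ : ℝ → Measure ℝ) (x0 : ℝ) (Q : Measure (ℕ → ℝ)) : Prop :=
  IsProbabilityMeasure Q ∧
  ∀ n : ℕ, Q.map (fun s (i : Fin (n + 1)) => s i.val) = finLaw κ x0 n

/-- The barrier-crossing event `{τ_b < ∞}`. -/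
def crossEvent (b : ℝ) : Set (ℕ → ℝ) := {s | ∃ n, s n > b}

/-- `B` belongs to the σ-algebra `F_{τ_b}` of the stopping time `τ_b`:
for every `n`, the set `B ∩ {τ_b = n}` is measurable w.r.t. the σ-algebra generated
by the first `n+1` coordinates. -/
def StoppedMeasurable (b : ℝ) (B : Set (ℕ → ℝ)) : Prop :=
  ∀ n : ℕ, MeasurableSet[MeasurableSpace.comap
      (fun (s : ℕ → ℝ) (i : Fin (n + 1)) => s i.val) inferInstance]
    (B ∩ {s : ℕ → ℝ | s n > b ∧ ∀ k < n, s k ≤ b})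

/-- `Qp` is a direct proposal for exact conditional sampling from `Pp(· | τ_b < ∞)`:
`Qp(B) ≥ Pp(B)` for every `B ∈ F_{τ_b}` with `B ⊆ {τ_b < ∞}`, with strict inequality
for at least one such `B`. -/
def DirectProposal (b : ℝ) (Pp Qp : Measure (ℕ → ℝ)) : Prop :=
  (∀ B : Set (ℕ → ℝ), StoppedMeasurable b B → B ⊆ crossEvent b → Pp B ≤ Qp B) ∧
  ∃ B : Set (ℕ → ℝ), StoppedMeasurable b B ∧ B ⊆ crossEvent b ∧ Pp B < Qp B

/-- The barrier-crossing time `τ_b = inf{n : s n > b}`, with value `∞` if the path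
never crosses the barrier. -/
noncomputable def tauInf (b : ℝ) (s : ℕ → ℝ) : ℝ≥0∞ :=
  ⨅ n ∈ {m : ℕ | s m > b}, (n : ℝ≥0∞)

section FinLaw

variable {n : ℕ}

lemma measurable_snoc_uncurry :
    Measurable fun p : (Fin (n + 1) → ℝ) × ℝ => (Fin.snoc p.1 p.2 : Fin (n + 2) → ℝ) := by
  refine measurable_pi_lambda _ fun i => ?_
  induction i using Fin.lastCases with
  | last => simpa using measurable_snd
  | cast j =>
    simp only [Fin.snoc_castSucc]
    exact (measurable_pi_apply j).comp measurable_fst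

lemma measurable_snoc_right (x : Fin (n + 1) → ℝ) :
    Measurable (Fin.snoc (α := fun _ => ℝ) x) :=
  measurable_snoc_uncurry.comp measurable_prodMk_left

lemma measurable_map_snoc (κ : Kernel ℝ ℝ) [IsSFiniteKernel κ] :
    Measurable fun x : Fin (n + 1) → ℝ =>
      (κ (x (Fin.last n))).map (Fin.snoc (α := fun _ => ℝ) x) := by
  refine Measure.measurable_of_measurable_coe _ fun s hs => ?_
  simp_rw [Measure.map_apply (measurable_snoc_right _) hs]
  exact (κ.comap _ (measurable_pi_apply (Fin.last n))).measurable_kernel_prodMk_left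
    (measurable_snoc_uncurry hs)

lemma finLaw_succ (κ : ℝ → Measure ℝ) (x0 : ℝ) (n : ℕ) :
    finLaw κ x0 (n + 1) =
      (finLaw κ x0 n).bind fun x => (κ (x (Fin.last n))).map (Fin.snoc (α := fun _ => ℝ) x) := rfl

noncomputable def pathDensity (g : ℝ → ℝ → ℝ≥0∞) (n : ℕ) (p : Fin (n + 1) → ℝ) : ℝ≥0∞ :=
  ∏ k : Fin n, g (p k.castSucc) (p k.succ)

variable {g : ℝ → ℝ → ℝ≥0∞}

lemma pathDensity_snoc (x : Fin (n + 1) → ℝ) (z : ℝ) :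
    pathDensity g (n + 1) (Fin.snoc x z) = pathDensity g n x * g (x (Fin.last n)) z := by
  simp only [pathDensity, Fin.prod_univ_castSucc, Fin.snoc_castSucc, Fin.succ_castSucc,
    Fin.succ_last, Fin.snoc_last]

lemma measurable_pathDensity (hg : Measurable (Function.uncurry g)) (n : ℕ) :
    Measurable (pathDensity g n) :=
  Finset.measurable_prod _ fun k _ =>
    show Measurable (Function.uncurry g ∘ fun p : Fin (n + 1) → ℝ => (p k.castSucc, p k.succ)) from
      hg.comp (by fun_prop)

theorem finLaw_withDensity (κ : Kernel ℝ ℝ) [IsSFiniteKernel κ]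
    (hg : Measurable (Function.uncurry g)) (hg_top : ∀ y z, g y z ≠ ∞) (x0 : ℝ) (n : ℕ) :
    finLaw (κ.withDensity g) x0 n = (finLaw κ x0 n).withDensity (pathDensity g n) := by
  have := Kernel.IsSFiniteKernel.withDensity κ hg_top
  induction n with
  | zero =>
    have h1 : pathDensity g 0 = 1 := funext fun _ => Finset.prod_empty
    rw [h1, withDensity_one]
    rfl
  | succ n ih =>
    ext s hs
    have hρ := measurable_pathDensity hg
    have hstep : Measurable fun x : Fin (n + 1) → ℝ =>
        ((κ.withDensity g) (x (Fin.last n))).map (Fin.snoc (α := fun _ => ℝ) x) s :=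
      (Measure.measurable_coe hs).comp (measurable_map_snoc _)
    rw [finLaw_succ, ih, Measure.bind_apply hs (measurable_map_snoc _).aemeasurable,
      lintegral_withDensity_eq_lintegral_mul _ (hρ n) hstep,
      withDensity_apply _ hs, ← lintegral_indicator hs, finLaw_succ,
      Measure.lintegral_bind (measurable_map_snoc κ).aemeasurable
        ((hρ (n + 1)).indicator hs).aemeasurable]
    refine lintegral_congr fun x => ?_
    have hpre := measurable_snoc_right x hs
    rw [Pi.mul_apply, Measure.map_apply (measurable_snoc_right x) hs,
      Kernel.withDensity_apply' _ hg, lintegral_map ((hρ (n + 1)).indicator hs)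
        (measurable_snoc_right x), ← lintegral_const_mul _ hg.of_uncurry_left,
      ← lintegral_indicator hpre]
    congr 1
    funext z
    by_cases hz : (Fin.snoc x z : Fin (n + 2) → ℝ) ∈ s
    · simp [hz, pathDensity_snoc]
    · simp [hz]

end FinLaw

section Stopping

def pathProj (n : ℕ) (s : ℕ → ℝ) : Fin (n + 1) → ℝ := fun i => s i

lemma measurable_pathProj (n : ℕ) : Measurable (pathProj n) :=
  measurable_pi_lambda _ fun i => measurable_pi_apply i.val

def hitEvent (b : ℝ) (n : ℕ) : Set (ℕ → ℝ) := {s | s n > b ∧ ∀ k < n, s k ≤ b}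

def firstExceedAt (b : ℝ) (n : ℕ) : Set (Fin (n + 1) → ℝ) :=
  {p | b < p (Fin.last n) ∧ ∀ k : Fin n, p k.castSucc ≤ b}

lemma measurableSet_firstExceedAt (b : ℝ) (n : ℕ) : MeasurableSet (firstExceedAt b n) := by
  simp only [firstExceedAt, ofPred_and, ofPred_forall]
  exact (measurableSet_lt measurable_const (measurable_pi_apply _)).inter <|
    MeasurableSet.iInter fun k => measurableSet_le (measurable_pi_apply _) measurable_const

lemma preimage_pathProj_firstExceedAt (b : ℝ) (n : ℕ) :
    pathProj n ⁻¹' firstExceedAt b n = hitEvent b n := by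
  ext s
  simp [pathProj, firstExceedAt, hitEvent, Fin.forall_iff]

lemma StoppedMeasurable.exists_preimage {b : ℝ} {B : Set (ℕ → ℝ)} (hB : StoppedMeasurable b B)
    (n : ℕ) : ∃ A, MeasurableSet A ∧ A ⊆ firstExceedAt b n ∧
      pathProj n ⁻¹' A = B ∩ hitEvent b n := by
  obtain ⟨A, hA, hAB⟩ := MeasurableSpace.measurableSet_comap.mp (hB n)
  refine ⟨A ∩ firstExceedAt b n, hA.inter (measurableSet_firstExceedAt b n),
    inter_subset_right, ?_⟩
  rw [preimage_inter, preimage_pathProj_firstExceedAt]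
  change (fun (s : ℕ → ℝ) (i : Fin (n + 1)) => s i.val) ⁻¹' A ∩ _ = _
  rw [hAB, hitEvent, inter_assoc, inter_self]

lemma iUnion_inter_hitEvent {b : ℝ} {B : Set (ℕ → ℝ)} (hB : B ⊆ crossEvent b) :
    ⋃ n, B ∩ hitEvent b n = B := by
  refine (iUnion_subset fun n => inter_subset_left).antisymm fun s hs => ?_
  classical
  have hex : ∃ n, s n > b := hB hs
  exact mem_iUnion.mpr ⟨Nat.find hex, hs, Nat.find_spec hex,
    fun k hk => not_lt.mp (Nat.find_min hex hk)⟩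

lemma pairwise_disjoint_hitEvent (b : ℝ) :
    Pairwise fun i j => Disjoint (hitEvent b i) (hitEvent b j) := by
  intro i j hij
  refine disjoint_left.mpr fun s hi hj => ?_
  rcases hij.lt_or_gt with h | h
  · exact (hj.2 i h).not_gt hi.1
  · exact (hi.2 j h).not_gt hj.1

theorem le_of_map_pathProj_le {b : ℝ} {Pp Qp : Measure (ℕ → ℝ)}
    (h : ∀ n A, MeasurableSet A → A ⊆ firstExceedAt b n →
      Pp.map (pathProj n) A ≤ Qp.map (pathProj n) A)
    {B : Set (ℕ → ℝ)} (hB : StoppedMeasurable b B) (hBcross : B ⊆ crossEvent b) :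
    Pp B ≤ Qp B := by
  choose A hA hAsub hAB using hB.exists_preimage
  have hmeas : ∀ n, MeasurableSet (B ∩ hitEvent b n) := fun n =>
    hAB n ▸ measurable_pathProj n (hA n)
  have hdisj : Pairwise fun i j => Disjoint (B ∩ hitEvent b i) (B ∩ hitEvent b j) :=
    (pairwise_disjoint_hitEvent b).mono fun i j h =>
      h.mono inter_subset_right inter_subset_right
  rw [← iUnion_inter_hitEvent hBcross, measure_iUnion hdisj hmeas, measure_iUnion hdisj hmeas]
  refine ENNReal.tsum_le_tsum fun n => ?_
  rw [← hAB n, ← Measure.map_apply (measurable_pathProj n) (hA n),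
    ← Measure.map_apply (measurable_pathProj n) (hA n)]
  exact h n _ (hA n) (hAsub n)

end Stopping

section RatioDensity

noncomputable def ratioDensity (v w : ℝ → ℝ) (y z : ℝ) : ℝ≥0∞ := ENNReal.ofReal (v z / w y)

variable {v w : ℝ → ℝ} {b : ℝ}

lemma measurable_ratioDensity (hv : Measurable v) (hw : Measurable w) :
    Measurable (Function.uncurry (ratioDensity v w)) :=
  ENNReal.measurable_ofReal.comp ((hv.comp measurable_snd).div (hw.comp measurable_fst))

lemma one_le_prod_div_of_mem_firstExceedAt (hv : Monotone v) (hv0 : ∀ t, 0 ≤ v t)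
    (hw : ∀ t, 0 < w t) (hwv : ∀ t ≤ b, w t ≤ v t) {n : ℕ} {p : Fin (n + 1) → ℝ}
    (hp : p ∈ firstExceedAt b n) :
    1 ≤ ∏ k : Fin n, v (p k.succ) / w (p k.castSucc) := by
  obtain ⟨hlast, hbefore⟩ := hp
  rcases n with _ | n
  · simp
  have hfirst : p 0 ≤ b := hbefore 0
  have hv_first : v (p 0) ≤ v (p (Fin.last _)) := hv (hfirst.trans hlast.le)
  have hv_last : 0 < v (p (Fin.last _)) := (hw _).trans_le ((hwv _ hfirst).trans hv_first)
  -- Both products run over `v (p 0), …, v (p n)` with one end swapped for the other.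
  have hshift : (∏ k : Fin (n + 1), v (p k.castSucc)) * v (p (Fin.last _)) =
      v (p 0) * ∏ k : Fin (n + 1), v (p k.succ) := by
    rw [← Fin.prod_univ_castSucc (fun k => v (p k)), Fin.prod_univ_succ]
  rw [Finset.prod_div_distrib, one_le_div (Finset.prod_pos fun k _ => hw _)]
  calc ∏ k : Fin (n + 1), w (p k.castSucc)
      ≤ ∏ k : Fin (n + 1), v (p k.castSucc) :=
        Finset.prod_le_prod (fun k _ => (hw _).le) fun k _ => hwv _ (hbefore k)
    _ ≤ ∏ k : Fin (n + 1), v (p k.succ) := by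
        refine le_of_mul_le_mul_right ?_ hv_last
        rw [hshift, mul_comm _ (v _)]
        exact mul_le_mul_of_nonneg_right hv_first (Finset.prod_nonneg fun k _ => hv0 _)

end RatioDensity

section MarkovLaw

variable {κ : Kernel ℝ ℝ} {x0 : ℝ} {Q : Measure (ℕ → ℝ)}

lemma IsMarkovLaw.map_pathProj (hQ : IsMarkovLaw κ x0 Q) (n : ℕ) :
    Q.map (pathProj n) = finLaw κ x0 n :=
  hQ.2 n

lemma IsMarkovLaw.map_pathProj_one [IsSFiniteKernel κ] (hQ : IsMarkovLaw κ x0 Q) :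
    Q.map (pathProj 1) = (κ x0).map fun z => ![x0, z] := by
  rw [hQ.map_pathProj, finLaw_succ, finLaw, Measure.dirac_bind (measurable_map_snoc κ)]
  congr 1
  funext z
  ext i
  fin_cases i <;> rfl

lemma IsMarkovLaw.measure_jump [IsSFiniteKernel κ] (hQ : IsMarkovLaw κ x0 Q) {b b₁ : ℝ}
    (hx0 : x0 ≤ b) : Q {s | s 0 ≤ b ∧ b₁ < s 1} = κ x0 (Ioi b₁) := by
  have hA : MeasurableSet {p : Fin 2 → ℝ | p 0 ≤ b ∧ b₁ < p 1} :=
    (measurableSet_le (measurable_pi_apply 0) measurable_const).inter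
      (measurableSet_lt measurable_const (measurable_pi_apply 1))
  rw [show {s : ℕ → ℝ | s 0 ≤ b ∧ b₁ < s 1} = pathProj 1 ⁻¹' {p | p 0 ≤ b ∧ b₁ < p 1} from rfl,
    ← Measure.map_apply (measurable_pathProj 1) hA, hQ.map_pathProj_one,
    Measure.map_apply (by fun_prop) hA]
  congr 1
  ext z
  simp [hx0]

end MarkovLaw

lemma stoppedMeasurable_jump {b b₁ : ℝ} (hb : b ≤ b₁) :
    StoppedMeasurable b {s | s 0 ≤ b ∧ b₁ < s 1} := by
  intro n
  refine MeasurableSpace.measurableSet_comap.mpr ?_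
  rcases n with _ | _ | n
  · refine ⟨∅, .empty, ?_⟩
    rw [preimage_empty, eq_comm, eq_empty_iff_forall_notMem]
    rintro s ⟨⟨h0, -⟩, h0', -⟩
    linarith
  · refine ⟨{p | p 0 ≤ b ∧ b₁ < p 1},
      (measurableSet_le (measurable_pi_apply 0) measurable_const).inter
        (measurableSet_lt measurable_const (measurable_pi_apply 1)), ?_⟩
    ext s
    show s 0 ≤ b ∧ b₁ < s 1 ↔ (s 0 ≤ b ∧ b₁ < s 1) ∧ s 1 > b ∧ ∀ k < 1, s k ≤ b
    refine ⟨fun h => ⟨h, hb.trans_lt h.2, fun k hk => ?_⟩, fun h => h.1⟩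
    obtain rfl : k = 0 := Nat.lt_one_iff.mp hk
    exact h.1
  · refine ⟨∅, .empty, ?_⟩
    rw [preimage_empty, eq_comm, eq_empty_iff_forall_notMem]
    rintro s ⟨⟨-, h1⟩, -, hbefore⟩
    linarith [hbefore 1 (by omega)]

lemma measure_lt_setLIntegral_of_one_lt {α : Type*} [MeasurableSpace α] {μ : Measure α}
    {s : Set α} {f : α → ℝ≥0∞} {r : ℝ≥0∞} (hs : MeasurableSet s) (hμs : μ s ≠ 0)
    (hμs_top : μ s ≠ ∞) (hr : 1 < r) (hf : ∀ z ∈ s, r ≤ f z) :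
    μ s < ∫⁻ z in s, f z ∂μ :=
  calc μ s = 1 * μ s := (one_mul _).symm
    _ < r * μ s := ENNReal.mul_lt_mul_left hμs hμs_top hr
    _ = ∫⁻ _ in s, r ∂μ := (setLIntegral_const s r).symm
    _ ≤ ∫⁻ z in s, f z ∂μ := setLIntegral_mono' hs hf

section DirectProposal

variable {κ : Kernel ℝ ℝ} {v w : ℝ → ℝ} {x0 b : ℝ} {Pp Qp : Measure (ℕ → ℝ)}

theorem IsMarkovLaw.le_of_withDensity_ratio [IsSFiniteKernel κ] (hv : Monotone v)
    (hv0 : ∀ t, 0 ≤ v t) (hw_meas : Measurable w) (hw : ∀ t, 0 < w t)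
    (hwv : ∀ t ≤ b, w t ≤ v t) (hP : IsMarkovLaw κ x0 Pp)
    (hQ : IsMarkovLaw (κ.withDensity (ratioDensity v w)) x0 Qp)
    {B : Set (ℕ → ℝ)} (hB : StoppedMeasurable b B) (hBcross : B ⊆ crossEvent b) :
    Pp B ≤ Qp B := by
  refine le_of_map_pathProj_le (fun n A hA hAsub => ?_) hB hBcross
  rw [hP.map_pathProj, hQ.map_pathProj,
    finLaw_withDensity κ (measurable_ratioDensity hv.measurable hw_meas)
      (fun _ _ => ENNReal.ofReal_ne_top),
    withDensity_apply _ hA, ← setLIntegral_one]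
  refine setLIntegral_mono' hA fun p hp => ?_
  rw [pathDensity]
  simp only [ratioDensity]
  rw [← ENNReal.ofReal_prod_of_nonneg fun k _ => div_nonneg (hv0 _) (hw _).le]
  exact ENNReal.one_le_ofReal.mpr (one_le_prod_div_of_mem_firstExceedAt hv hv0 hw hwv (hAsub hp))

theorem directProposal_of_withDensity_ratio [IsFiniteKernel κ] (hv : Monotone v)
    (hv0 : ∀ t, 0 ≤ v t) (hw_meas : Measurable w) (hw : ∀ t, 0 < w t)
    (hwv : ∀ t ≤ b, w t ≤ v t) {b₁ : ℝ} (hx0 : x0 ≤ b) (hb₁ : b ≤ b₁)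
    (hκ : κ x0 (Ioi b₁) ≠ 0) (hjump : w x0 < v b₁) (hP : IsMarkovLaw κ x0 Pp)
    (hQ : IsMarkovLaw (κ.withDensity (ratioDensity v w)) x0 Qp) :
    DirectProposal b Pp Qp := by
  have hρ := measurable_ratioDensity hv.measurable hw_meas
  have : IsSFiniteKernel (κ.withDensity (ratioDensity v w)) :=
    Kernel.IsSFiniteKernel.withDensity κ fun _ _ => ENNReal.ofReal_ne_top
  refine ⟨fun B hB hBcross => hP.le_of_withDensity_ratio hv hv0 hw_meas hw hwv hQ hB hBcross,
    {s | s 0 ≤ b ∧ b₁ < s 1}, stoppedMeasurable_jump hb₁, fun s hs => ⟨1, hb₁.trans_lt hs.2⟩, ?_⟩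
  rw [hP.measure_jump hx0, hQ.measure_jump hx0, Kernel.withDensity_apply' _ hρ]
  refine measure_lt_setLIntegral_of_one_lt measurableSet_Ioi hκ (measure_ne_top _ _)
    (ENNReal.one_lt_ofReal.mpr ((one_lt_div (hw x0)).mpr hjump)) fun z hz =>
      ENNReal.ofReal_le_ofReal (div_le_div_of_nonneg_right (hv (le_of_lt hz)) (hw x0).le)

end DirectProposal

section RandomWalk

lemma measurable_stepLaw (μ : Measure ℝ) [SFinite μ] : Measurable (stepLaw μ) := by
  refine Measure.measurable_of_measurable_coe _ fun s hs => ?_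
  simp_rw [stepLaw, Measure.map_apply (measurable_const_add _) hs]
  exact measurable_measure_prodMk_left (measurable_add hs)

noncomputable def stepKernel (μ : Measure ℝ) [SFinite μ] : Kernel ℝ ℝ :=
  ⟨stepLaw μ, measurable_stepLaw μ⟩

variable (μ : Measure ℝ) [IsProbabilityMeasure μ]

instance : IsMarkovKernel (stepKernel μ) :=
  ⟨fun y => Measure.isProbabilityMeasure_map (measurable_const_add y).aemeasurable⟩

lemma stepKernel_zero : stepKernel μ 0 = μ := by
  simp [stepKernel, stepLaw]

lemma BGkernel_eq_withDensity {v w : ℝ → ℝ} (hv : Measurable v) (hw : Measurable w) (b c : ℝ) :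
    BGkernel μ v w b c = ⇑((stepKernel μ).withDensity
      (ratioDensity (fun t => v (t - b - c)) fun t => w (t - b - c))) := by
  funext y
  rw [Kernel.withDensity_apply _ (measurable_ratioDensity (by fun_prop) (by fun_prop))]
  rfl

end RandomWalk

section Tails

variable {Ω : Type*} [MeasurableSpace Ω] (P : Measure Ω)

lemma exists_lt_measure_lt (f : Ω → ℝ) {r : ℝ≥0∞} (hr : r < P univ) :
    ∃ t, r < P {ω | t < f ω} := by
  have hmono : Monotone fun t : ℝ => {ω | -t < f ω} := fun s t hst ω hω =>
    (neg_le_neg hst).trans_lt hω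
  have hunion : ⋃ t : ℝ, {ω | -t < f ω} = univ :=
    eq_univ_of_forall fun ω => mem_iUnion.mpr ⟨-f ω + 1, by simp⟩
  rw [← hunion, hmono.measure_iUnion] at hr
  obtain ⟨t, ht⟩ := lt_iSup_iff.mp hr
  exact ⟨-t, ht⟩

lemma exists_lt_toReal_measure_gt [IsProbabilityMeasure P] (f : Ω → ℝ) {a : ℝ} (ha : a < 1) :
    ∃ m, a < (P {ω | f ω > -m}).toReal := by
  obtain ⟨t, ht⟩ := exists_lt_measure_lt P f (r := ENNReal.ofReal a)
    (by rw [measure_univ]; exact ENNReal.ofReal_lt_one.mpr ha)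
  refine ⟨-t, ?_⟩
  rw [neg_neg]
  calc a ≤ (ENNReal.ofReal a).toReal := by rw [ENNReal.toReal_ofReal']; exact le_max_left a 0
    _ < _ := ENNReal.toReal_strict_mono (measure_ne_top _ _) ht

lemma exists_toReal_measure_gt_lt_one [IsProbabilityMeasure P] {f : Ω → ℝ} (hf : Measurable f) :
    ∃ c, (P {ω | f ω > c}).toReal < 1 := by
  obtain ⟨t, ht⟩ := exists_lt_measure_lt P (-f) (r := 0) (by simp)
  refine ⟨-t, ENNReal.toReal_lt_of_lt_ofReal ?_⟩
  have hle : {ω | t < -f ω} ⊆ {ω | f ω ≤ -t} := fun ω hω => by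
    simp only [mem_ofPred_eq] at hω ⊢; linarith
  calc P {ω | f ω > -t} = P {ω | f ω ≤ -t}ᶜ := by congr 1; ext; simp
    _ = 1 - P {ω | f ω ≤ -t} := prob_compl_eq_one_sub (measurableSet_le hf measurable_const)
    _ < 1 := ENNReal.sub_lt_self ENNReal.one_ne_top one_ne_zero
        (ht.trans_le (measure_mono hle)).ne'
    _ = ENNReal.ofReal 1 := ENNReal.ofReal_one.symm

lemma monotone_toReal_measure_neg_lt [IsFiniteMeasure P] (f : Ω → ℝ) :
    Monotone fun x : ℝ => (P {ω | -x < f ω}).toReal := fun _ _ h =>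
  ENNReal.toReal_mono (measure_ne_top _ _)
    (measure_mono fun _ hω => (neg_le_neg h).trans_lt hω)

lemma ProbabilityTheory.IndepFun.measure_add_gt_pos {X Z : Ω → ℝ} (hXZ : IndepFun X Z P)
    (hX : ∀ t, 0 < P {ω | X ω > t}) {s : ℝ} (hZ : 0 < P {ω | Z ω > s}) (t : ℝ) :
    0 < P {ω | X ω + Z ω > t} := by
  have hsub : X ⁻¹' Ioi (t - s) ∩ Z ⁻¹' Ioi s ⊆ {ω | X ω + Z ω > t} := fun ω ⟨hx, hz⟩ => by
    simp only [mem_preimage, mem_Ioi] at hx hz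
    simp only [mem_ofPred_eq]
    linarith
  refine lt_of_lt_of_le ?_ (measure_mono hsub)
  rw [hXZ.measure_inter_preimage_eq_mul _ _ measurableSet_Ioi measurableSet_Ioi]
  exact ENNReal.mul_pos (hX _).ne' hZ.ne'

end Tails

theorem stmt12_general
    {Ω : Type*} [MeasurableSpace Ω] (P : Measure Ω) [IsProbabilityMeasure P]
    (X Z : Ω → ℝ) (hXm : Measurable X) (hZm : Measurable Z)
    (hXsupp : ∀ t : ℝ, 0 < P {ω | X ω > t})
    (hindep : IndepFun X Z P)
    (v w : ℝ → ℝ)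
    (hv : ∀ x, v x = (P {ω | Z ω > -x}).toReal)
    (hw : ∀ x, w x = (P {ω | X ω + Z ω > -x}).toReal)
    (Ppath : Measure (ℕ → ℝ))
    (hPpath : IsMarkovLaw (stepLaw (P.map X)) 0 Ppath)
    (hdom : ∃ T : ℝ, ∀ t ≥ T,
      (P {ω | X ω + Z ω > t}).toReal ≤ (P {ω | Z ω > t}).toReal) :
    ∃ c : ℝ, ∀ b : ℝ, 0 ≤ b → ∀ Qpath : Measure (ℕ → ℝ),
      IsMarkovLaw (BGkernel (P.map X) v w b c) 0 Qpath →
      DirectProposal b Ppath Qpath := by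
  obtain ⟨T, hT⟩ := hdom
  have := Measure.isProbabilityMeasure_map (μ := P) hXm.aemeasurable
  have hv_mono : Monotone v := fun x y h => by
    rw [hv, hv]; exact monotone_toReal_measure_neg_lt P Z h
  have hw_mono : Monotone w := fun x y h => by
    rw [hw, hw]; exact monotone_toReal_measure_neg_lt P (X + Z) h
  obtain ⟨s₀, hs₀⟩ := exists_lt_measure_lt P Z (r := 0) (by simp)
  have hw_pos : ∀ t, 0 < w t := fun t => by
    rw [hw]
    exact ENNReal.toReal_pos (hindep.measure_add_gt_pos P hXsupp hs₀ _).ne' (measure_ne_top _ _)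
  obtain ⟨c₀, hc₀⟩ := exists_toReal_measure_gt_lt_one P (hXm.add hZm)
  -- `c ≥ T` gives `w ≤ v` at `t - b - c` for all `t ≤ b`; `c ≥ c₀` keeps `w (-b - c) < 1`.
  refine ⟨max T c₀, fun b hb Qpath hQ => ?_⟩
  set c := max T c₀
  have hw_lt_one : w (0 - b - c) < 1 :=
    (hw_mono (show 0 - b - c ≤ -c₀ by linarith [le_max_right T c₀])).trans_lt
      (by rw [hw, neg_neg]; exact hc₀)
  obtain ⟨m, hm⟩ := exists_lt_toReal_measure_gt P Z hw_lt_one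
  rw [← hv] at hm
  rw [BGkernel_eq_withDensity _ hv_mono.measurable hw_mono.measurable] at hQ
  refine directProposal_of_withDensity_ratio (b₁ := max b (b + c + m))
    (fun x y h => hv_mono (by linarith)) (fun _ => by rw [hv]; exact ENNReal.toReal_nonneg)
    (show Monotone fun t => w (t - b - c) from fun x y h => hw_mono (by linarith)).measurable
    (fun _ => hw_pos _)
    (fun s hs => by rw [hv, hw]; exact hT _ (by linarith [le_max_left T c₀]))
    hb (le_max_left _ _) ?_ (hm.trans_le (hv_mono ?_)) hPpath hQ
  · rw [stepKernel_zero, Measure.map_apply hXm measurableSet_Ioi]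
    exact (hXsupp _).ne'
  · linarith [le_max_right b (b + c + m)]

/-- Proposition 3.2(i) of the paper. If `P(X+Z>t) ≤ P(Z>t)` for
all sufficiently large `t`, then there is a (sufficiently large) `c ∈ ℝ` such that
for every `b ≥ 0` the Blanchet–Glynn path measure `ℚ^{b,c}` is a direct proposal for
exact conditional sampling from `ℙ(· | τ_b < ∞)`. -/
theorem stmt12
    {Ω : Type*} [MeasurableSpace Ω] (P : Measure Ω) [IsProbabilityMeasure P]
    (X Z : Ω → ℝ) (hXm : Measurable X) (hZm : Measurable Z)
    (hXint : Integrable X P) (hXmean : ∫ ω, X ω ∂P < 0)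
    (hXsupp : ∀ t : ℝ, 0 < P {ω | X ω > t})
    (Fbar : ℝ → ℝ) (hFbar : ∀ t, Fbar t = (P {ω | X ω > t}).toReal)
    (hindep : IndepFun X Z P)
    (hZlaw : ∀ t : ℝ, (P {ω | Z ω > t}).toReal
        = min 1 ((1 / |∫ ω, X ω ∂P|) * ∫ s in Set.Ioi t, Fbar s))
    (v w : ℝ → ℝ)
    (hv : ∀ x, v x = (P {ω | Z ω > -x}).toReal)
    (hw : ∀ x, w x = (P {ω | X ω + Z ω > -x}).toReal)
    (Ppath : Measure (ℕ → ℝ))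
    (hPpath : IsMarkovLaw (stepLaw (P.map X)) 0 Ppath)
    (hdom : ∃ T : ℝ, ∀ t ≥ T,
      (P {ω | X ω + Z ω > t}).toReal ≤ (P {ω | Z ω > t}).toReal) :
    ∃ c : ℝ, ∀ b : ℝ, 0 ≤ b → ∀ Qpath : Measure (ℕ → ℝ),
      IsMarkovLaw (BGkernel (P.map X) v w b c) 0 Qpath →
      DirectProposal b Ppath Qpath :=
  stmt12_general P X Z hXm hZm hXsupp hindep v w hv hw Ppath hPpath hdom
end

section
/- Suppose c ∈ ℝ is such that w(−t−c) ≤ v(−t−c) for all t ≥ 0 (equivalently, P(X + Z > c + t) ≤ P(Z > c + t) for all t ≥ 0). Then for every b ≥ 0, every n ≥ 1, and every finite real sequence s_0 = 0, s_1, …, s_n with s_k ≤ b for all 0 ≤ k ≤ n−1 and s_n > b, the likelihood-ratio product satisfies (w(s_0 − b − c)/v(s_n − b − c)) · ∏_{k=1}^{n−1} (w(s_k − b − c)/v(s_k − b − c)) ≤ 1. -/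
open MeasureTheory ProbabilityTheory Filter Set
open scoped ENNReal

/-- If `c` is such that `w(−t−c) ≤ v(−t−c)` for all `t ≥ 0`
(where `v(x) = P(Z > −x)` and `w(x) = P(X + Z > −x)`), then for every `b ≥ 0`,
every `n ≥ 1` and every path `s₀ = 0, s₁, …, sₙ` with `s_k ≤ b` for `k ≤ n−1` and
`s_n > b`, the likelihood-ratio product
`(w(s₀−b−c)/v(sₙ−b−c)) · ∏_{k=1}^{n−1} w(s_k−b−c)/v(s_k−b−c)` is at most `1`. -/
theorem stmt14
    {Ω : Type*} [MeasurableSpace Ω] (P : Measure Ω) [IsProbabilityMeasure P]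
    (X Z : Ω → ℝ) (hXm : Measurable X) (hZm : Measurable Z)
    (hXint : Integrable X P) (hXmean : ∫ ω, X ω ∂P < 0)
    (hXsupp : ∀ t : ℝ, 0 < P {ω | X ω > t})
    (Fbar : ℝ → ℝ) (hFbar : ∀ t, Fbar t = (P {ω | X ω > t}).toReal)
    (hindep : IndepFun X Z P)
    (hZlaw : ∀ t : ℝ, (P {ω | Z ω > t}).toReal
        = min 1 ((1 / |∫ ω, X ω ∂P|) * ∫ s in Set.Ioi t, Fbar s))
    (v w : ℝ → ℝ)
    (hv : ∀ x, v x = (P {ω | Z ω > -x}).toReal)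
    (hw : ∀ x, w x = (P {ω | X ω + Z ω > -x}).toReal)
    (c : ℝ) (hc : ∀ t : ℝ, 0 ≤ t → w (-t - c) ≤ v (-t - c)) :
    ∀ b : ℝ, 0 ≤ b → ∀ n : ℕ, 1 ≤ n → ∀ s : ℕ → ℝ, s 0 = 0 →
      (∀ k < n, s k ≤ b) → s n > b →
      (w (s 0 - b - c) / v (s n - b - c))
        * ∏ k ∈ Finset.Ico 1 n, (w (s k - b - c) / v (s k - b - c)) ≤ 1 := by
  intro b hb n hn s hs0 hsk hsn
  have hv0 : ∀ x, 0 ≤ v x := fun x => by rw [hv]; exact ENNReal.toReal_nonneg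
  have hw0 : ∀ x, 0 ≤ w x := fun x => by rw [hw]; exact ENNReal.toReal_nonneg
  have hvmono : ∀ x y : ℝ, x ≤ y → v x ≤ v y := by
    intro x y hxy
    rw [hv, hv]
    refine ENNReal.toReal_mono (measure_ne_top P _) (measure_mono ?_)
    intro ω hω
    exact lt_of_le_of_lt (neg_le_neg hxy) hω
  have hwv : ∀ x : ℝ, x ≤ b → w (x - b - c) ≤ v (x - b - c) := by
    intro x hx
    have h := hc (b - x) (by linarith)
    have : -(b - x) - c = x - b - c := by ring
    rwa [this] at h
  have hprod : (∏ k ∈ Finset.Ico 1 n, (w (s k - b - c) / v (s k - b - c))) ≤ 1 := by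
    refine Finset.prod_le_one (fun k hk => div_nonneg (hw0 _) (hv0 _)) ?_
    intro k hk
    rw [Finset.mem_Ico] at hk
    exact div_le_one_of_le₀ (hwv _ (hsk k hk.2)) (hv0 _)
  have hfirst : w (s 0 - b - c) / v (s n - b - c) ≤ 1 := by
    refine div_le_one_of_le₀ ?_ (hv0 _)
    calc w (s 0 - b - c) ≤ v (s 0 - b - c) := hwv _ (by rw [hs0]; exact hb)
      _ ≤ v (s n - b - c) := hvmono _ _ (by rw [hs0]; linarith)
  exact mul_le_one₀ hfirst (Finset.prod_nonneg fun k _ => div_nonneg (hw0 _) (hv0 _)) hprod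
end
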